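/- arXiv:math/0507068 — 9 statements merged into one kernel-verified Lean document; each statement's English description precedes it below -/
import Mathlib

section
/- Let J be an almost complex structure and ∇ a connection on ℝ^n. Then the generalized horizontal lift J^{G,∇} satisfies J^{G,∇}(x,p)² = −Id_{2n} for every (x,p) ∈ ℝ^n × ℝ^n; that is, J^{G,∇} is an almost complex structure on the cotangent bundle T*ℝ^n. -/
open Matrix BigOperators

noncomputable section

/-- Lower-left block `A(x,p)` of the generalized horizontal lift:
`A^i_j(x,p) = p_k (Γ^k_{li}(x) J^l_j(x) − Γ^k_{jl}(x) J^l_i(x))`,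
where `Γ x k i j` denotes the Christoffel symbol `Γ^k_{ij}(x)`. -/
def Ablock {n : ℕ} (J : (Fin n → ℝ) → Matrix (Fin n) (Fin n) ℝ)
    (Γ : (Fin n → ℝ) → Fin n → Fin n → Fin n → ℝ) (x p : Fin n → ℝ) :
    Matrix (Fin n) (Fin n) ℝ :=
  Matrix.of fun i j =>
    ∑ k, p k * ((∑ l, Γ x k l i * J x l j) - ∑ l, Γ x k j l * J x l i)

/-- The generalized horizontal lift `J^{G,∇}(x,p) = [[J(x), 0], [A(x,p), ᵗJ(x)]]`. -/
def JG {n : ℕ} (J : (Fin n → ℝ) → Matrix (Fin n) (Fin n) ℝ)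
    (Γ : (Fin n → ℝ) → Fin n → Fin n → Fin n → ℝ) (x p : Fin n → ℝ) :
    Matrix (Fin n ⊕ Fin n) (Fin n ⊕ Fin n) ℝ :=
  Matrix.fromBlocks (J x) 0 (Ablock J Γ x p) (J x)ᵀ

/-- the generalized horizontal lift of an almost complex structure is an
almost complex structure on the cotangent bundle `T*ℝ^n = ℝ^n × ℝ^n`. -/
theorem statement0 (n : ℕ)
    (J : (Fin n → ℝ) → Matrix (Fin n) (Fin n) ℝ)
    (Γ : (Fin n → ℝ) → Fin n → Fin n → Fin n → ℝ)
    (hJsmooth : ∀ k j : Fin n, ContDiff ℝ (⊤ : ℕ∞) fun x => J x k j)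
    (hΓsmooth : ∀ k i j : Fin n, ContDiff ℝ (⊤ : ℕ∞) fun x => Γ x k i j)
    (hJ : ∀ x, J x * J x = -1) :
    ∀ x p : Fin n → ℝ, JG J Γ x p * JG J Γ x p = -1 := by
  intro x p
  have hJ' : ∀ l j : Fin n, ∑ m, J x l m * J x m j = -(if l = j then (1:ℝ) else 0) := by
    intro l j
    have h := congrFun (congrFun (hJ x) l) j
    simpa [Matrix.mul_apply, Matrix.one_apply] using h
  have key : Ablock J Γ x p * J x + (J x)ᵀ * Ablock J Γ x p = 0 := by
    ext i j
    simp only [Matrix.add_apply, Matrix.mul_apply, Matrix.transpose_apply, Ablock,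
      Matrix.of_apply, Matrix.zero_apply]
    have e1 : ∑ m, (∑ k, p k * ((∑ l, Γ x k l i * J x l m) - ∑ l, Γ x k m l * J x l i)) * J x m j
        = ∑ k, p k * ((-Γ x k j i) - ∑ m, ∑ l, Γ x k m l * J x l i * J x m j) := by
      simp only [Finset.sum_mul]
      rw [Finset.sum_comm]
      refine Finset.sum_congr rfl fun k _ => ?_
      have h1 : ∑ m, (∑ l, Γ x k l i * J x l m) * J x m j = -Γ x k j i := by
        calc ∑ m, (∑ l, Γ x k l i * J x l m) * J x m j
            = ∑ l, Γ x k l i * ∑ m, J x l m * J x m j := by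
              simp only [Finset.sum_mul, Finset.mul_sum]
              rw [Finset.sum_comm]
              exact Finset.sum_congr rfl fun _ _ => Finset.sum_congr rfl fun _ _ => by ring
          _ = -Γ x k j i := by
              simp only [hJ']
              simp
      have h1b : ∑ m, (∑ l, Γ x k m l * J x l i) * J x m j
          = ∑ m, ∑ l, Γ x k m l * J x l i * J x m j :=
        Finset.sum_congr rfl fun m _ => by rw [Finset.sum_mul]
      rw [← h1, ← h1b, ← Finset.sum_sub_distrib, Finset.mul_sum]
      exact Finset.sum_congr rfl fun m _ => by ring
    have e2 : ∑ m, J x m i * ∑ k, p k * ((∑ l, Γ x k l m * J x l j) - ∑ l, Γ x k j l * J x l m)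
        = ∑ k, p k * ((∑ m, ∑ l, Γ x k l m * J x l j * J x m i) + Γ x k j i) := by
      simp only [Finset.mul_sum]
      rw [Finset.sum_comm]
      refine Finset.sum_congr rfl fun k _ => ?_
      have h2 : ∑ m, J x m i * ∑ l, Γ x k j l * J x l m = -Γ x k j i := by
        calc ∑ m, J x m i * ∑ l, Γ x k j l * J x l m
            = ∑ l, Γ x k j l * ∑ m, J x l m * J x m i := by
              simp only [Finset.mul_sum]
              rw [Finset.sum_comm]
              exact Finset.sum_congr rfl fun _ _ => Finset.sum_congr rfl fun _ _ => by ring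
          _ = -Γ x k j i := by
              simp only [hJ']
              simp
      have h2b : ∑ m, (∑ l, Γ x k l m * J x l j) * J x m i
          = ∑ m, ∑ l, Γ x k l m * J x l j * J x m i :=
        Finset.sum_congr rfl fun m _ => by rw [Finset.sum_mul]
      have hadd : (∑ m, ∑ l, Γ x k l m * J x l j * J x m i) + Γ x k j i
          = (∑ m, (∑ l, Γ x k l m * J x l j) * J x m i)
            - ∑ m, J x m i * ∑ l, Γ x k j l * J x l m := by
        rw [h2, h2b]; ring
      rw [hadd, ← Finset.sum_sub_distrib, Finset.mul_sum]
      exact Finset.sum_congr rfl fun m _ => by ring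
    rw [e1, e2, ← Finset.sum_add_distrib]
    refine Finset.sum_eq_zero fun k _ => ?_
    have hswap : ∑ m, ∑ l, Γ x k m l * J x l i * J x m j
        = ∑ m, ∑ l, Γ x k l m * J x l j * J x m i := by
      rw [Finset.sum_comm]
      exact Finset.sum_congr rfl fun m _ => Finset.sum_congr rfl fun l _ => by ring
    rw [hswap]; ring
  have hJt : (J x)ᵀ * (J x)ᵀ = -1 := by
    rw [← Matrix.transpose_mul, hJ]
    simp
  rw [JG, Matrix.fromBlocks_multiply]
  have hbl : Ablock J Γ x p * J x + (J x)ᵀ * Ablock J Γ x p = 0 := key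
  have hneg : (-1 : Matrix (Fin n ⊕ Fin n) (Fin n ⊕ Fin n) ℝ)
      = Matrix.fromBlocks (-1) 0 0 (-1) := by
    rw [← Matrix.fromBlocks_one, Matrix.fromBlocks_neg]
    simp
  rw [hneg]
  ext (a | a) (b | b) <;>
    simp only [Matrix.fromBlocks_apply₁₁, Matrix.fromBlocks_apply₁₂,
      Matrix.fromBlocks_apply₂₁, Matrix.fromBlocks_apply₂₂]
  · rw [show J x * J x + 0 * Ablock J Γ x p = J x * J x by simp, hJ]
  · simp
  · have : Ablock J Γ x p * J x + (J x)ᵀ * Ablock J Γ x p = (0 : Matrix (Fin n) (Fin n) ℝ) := hbl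
    rw [this]
  · rw [show Ablock J Γ x p * 0 + (J x)ᵀ * (J x)ᵀ = (J x)ᵀ * (J x)ᵀ by simp, hJt]
end
end

section
/- (Satô) Let J be an almost complex structure on ℝ^n. Then the Satô (complete) lift satisfies J̃(x,p)² = −Id_{2n} for every (x,p) ∈ ℝ^n × ℝ^n; that is, J̃ is an almost complex structure on T*ℝ^n. -/
open Matrix BigOperators

noncomputable section

/-- Partial derivative `∂x_i f` at `x`. -/
def pd {n : ℕ} (f : (Fin n → ℝ) → ℝ) (i : Fin n) (x : Fin n → ℝ) : ℝ :=
  fderiv ℝ f x (Pi.single i 1)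

/-- Lower-left block of the Satô (complete) lift:
`B^i_j(x,p) = (1/2) p_k [∂x_j J^k_i − ∂x_i J^k_j + J^k_s J^q_i ∂x_q J^s_j − J^k_s J^q_j ∂x_q J^s_i]`. -/
def Bblock {n : ℕ} (J : (Fin n → ℝ) → Matrix (Fin n) (Fin n) ℝ) (x p : Fin n → ℝ) :
    Matrix (Fin n) (Fin n) ℝ :=
  Matrix.of fun i j =>
    (1 / 2) * ∑ k, p k *
      (pd (fun y => J y k i) j x - pd (fun y => J y k j) i x
        + (∑ s, ∑ q, J x k s * J x q i * pd (fun y => J y s j) q x)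
        - ∑ s, ∑ q, J x k s * J x q j * pd (fun y => J y s i) q x)

/-- The Satô (complete) lift `J̃(x,p) = [[J(x), 0], [B(x,p), ᵗJ(x)]]`. -/
def Sato {n : ℕ} (J : (Fin n → ℝ) → Matrix (Fin n) (Fin n) ℝ) (x p : Fin n → ℝ) :
    Matrix (Fin n ⊕ Fin n) (Fin n ⊕ Fin n) ℝ :=
  Matrix.fromBlocks (J x) 0 (Bblock J x p) (J x)ᵀ

lemma sum3_rot {n : ℕ} (g : Fin n → Fin n → Fin n → ℝ) :
    ∑ m, ∑ s, ∑ q, g m s q = ∑ s, ∑ q, ∑ m, g m s q := by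
  rw [Finset.sum_comm]
  exact Finset.sum_congr rfl fun s _ => Finset.sum_comm

lemma con {n : ℕ} {j : Fin n → Fin n → ℝ}
    (hjj : ∀ a b, (∑ s, j a s * j s b) = if a = b then (-1:ℝ) else 0)
    (g : Fin n → ℝ) (a : Fin n) :
    ∑ m, (∑ s, j a s * j s m) * g m = -g a := by
  simp only [hjj, ite_mul, neg_mul, one_mul, zero_mul]
  rw [Finset.sum_ite_eq]
  simp

lemma keyalg {n : ℕ} (j : Fin n → Fin n → ℝ) (f : Fin n → Fin n → Fin n → ℝ)
    (hjj : ∀ a b, (∑ s, j a s * j s b) = if a = b then (-1:ℝ) else 0)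
    (hfj : ∀ a b q, ∑ s, f a s q * j s b = -∑ s, j a s * f s b q)
    (k i i' : Fin n) :
    (∑ m, (f k i m - f k m i
        + (∑ s, ∑ q, j k s * j q i * f s m q)
        - ∑ s, ∑ q, j k s * j q m * f s i q) * j m i')
    + ∑ m, j m i * (f k m i' - f k i' m
        + (∑ s, ∑ q, j k s * j q m * f s i' q)
        - ∑ s, ∑ q, j k s * j q i' * f s m q) = 0 := by
  have hS1 : ∑ m, f k i m * j m i' = ∑ q, j q i' * f k i q :=
    Finset.sum_congr rfl fun m _ => mul_comm _ _
  have hS2 : ∑ m, f k m i * j m i' = -∑ m, j k m * f m i' i := hfj k i' i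
  have hS5 : ∑ m, j m i * f k m i' = -∑ m, j k m * f m i i' := by
    rw [show ∑ m, j m i * f k m i' = ∑ m, f k m i' * j m i from
      Finset.sum_congr rfl fun m _ => mul_comm _ _]
    exact hfj k i i'
  have hS3 : ∑ m, (∑ s, ∑ q, j k s * j q i * f s m q) * j m i' = ∑ q, j q i * f k i' q := by
    have e1 : ∀ m, (∑ s, ∑ q, j k s * j q i * f s m q) * j m i'
        = ∑ s, ∑ q, j k s * j q i * (f s m q * j m i') := by
      intro m
      rw [Finset.sum_mul]
      exact Finset.sum_congr rfl fun s _ => by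
        rw [Finset.sum_mul]; exact Finset.sum_congr rfl fun q _ => by ring
    simp only [e1]
    rw [sum3_rot]
    have e2 : ∀ s q, ∑ m, j k s * j q i * (f s m q * j m i')
        = j k s * j q i * ∑ m, f s m q * j m i' := fun s q => (Finset.mul_sum _ _ _).symm
    simp only [e2, hfj]
    rw [Finset.sum_comm]
    refine Finset.sum_congr rfl fun q _ => ?_
    have e3 : ∑ s, j k s * j q i * -∑ m, j s m * f m i' q
        = -(j q i) * ∑ m, (∑ s, j k s * j s m) * f m i' q := by
      simp only [Finset.mul_sum, Finset.sum_mul, mul_neg, neg_mul, Finset.sum_neg_distrib]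
      congr 1
      rw [Finset.sum_comm]
      exact Finset.sum_congr rfl fun m _ => Finset.sum_congr rfl fun s _ => by ring
    rw [e3, con hjj]
    ring
  have hS8 : ∑ m, j m i * (∑ s, ∑ q, j k s * j q i' * f s m q) = ∑ q, j q i' * f k i q := by
    have e1 : ∀ m, j m i * (∑ s, ∑ q, j k s * j q i' * f s m q)
        = ∑ s, ∑ q, j k s * j q i' * (f s m q * j m i) := by
      intro m
      rw [Finset.mul_sum]
      exact Finset.sum_congr rfl fun s _ => by
        rw [Finset.mul_sum]; exact Finset.sum_congr rfl fun q _ => by ring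
    simp only [e1]
    rw [sum3_rot]
    have e2 : ∀ s q, ∑ m, j k s * j q i' * (f s m q * j m i)
        = j k s * j q i' * ∑ m, f s m q * j m i := fun s q => (Finset.mul_sum _ _ _).symm
    simp only [e2, hfj]
    rw [Finset.sum_comm]
    refine Finset.sum_congr rfl fun q _ => ?_
    have e3 : ∑ s, j k s * j q i' * -∑ m, j s m * f m i q
        = -(j q i') * ∑ m, (∑ s, j k s * j s m) * f m i q := by
      simp only [Finset.mul_sum, Finset.sum_mul, mul_neg, neg_mul, Finset.sum_neg_distrib]
      congr 1
      rw [Finset.sum_comm]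
      exact Finset.sum_congr rfl fun m _ => Finset.sum_congr rfl fun s _ => by ring
    rw [e3, con hjj]
    ring
  have hS4 : ∑ m, (∑ s, ∑ q, j k s * j q m * f s i q) * j m i'
      = -∑ m, j k m * f m i i' := by
    have e1 : ∀ m, (∑ s, ∑ q, j k s * j q m * f s i q) * j m i'
        = ∑ s, ∑ q, j k s * f s i q * (j q m * j m i') := by
      intro m
      rw [Finset.sum_mul]
      exact Finset.sum_congr rfl fun s _ => by
        rw [Finset.sum_mul]; exact Finset.sum_congr rfl fun q _ => by ring
    simp only [e1]
    rw [sum3_rot]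
    have e2 : ∀ s q, ∑ m, j k s * f s i q * (j q m * j m i')
        = j k s * f s i q * ∑ m, j q m * j m i' := fun s q => (Finset.mul_sum _ _ _).symm
    simp only [e2, hjj]
    have e3 : ∀ s, (∑ q, j k s * f s i q * if q = i' then (-1:ℝ) else 0)
        = -(j k s * f s i i') := by
      intro s
      simp [mul_ite, mul_neg, mul_zero, Finset.sum_ite_eq']
    simp only [e3, Finset.sum_neg_distrib]
  have hS7 : ∑ m, j m i * (∑ s, ∑ q, j k s * j q m * f s i' q)
      = -∑ m, j k m * f m i' i := by
    have e1 : ∀ m, j m i * (∑ s, ∑ q, j k s * j q m * f s i' q)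
        = ∑ s, ∑ q, j k s * f s i' q * (j q m * j m i) := by
      intro m
      rw [Finset.mul_sum]
      exact Finset.sum_congr rfl fun s _ => by
        rw [Finset.mul_sum]; exact Finset.sum_congr rfl fun q _ => by ring
    simp only [e1]
    rw [sum3_rot]
    have e2 : ∀ s q, ∑ m, j k s * f s i' q * (j q m * j m i)
        = j k s * f s i' q * ∑ m, j q m * j m i := fun s q => (Finset.mul_sum _ _ _).symm
    simp only [e2, hjj]
    have e3 : ∀ s, (∑ q, j k s * f s i' q * if q = i then (-1:ℝ) else 0)
        = -(j k s * f s i' i) := by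
      intro s
      simp [mul_ite, mul_neg, mul_zero, Finset.sum_ite_eq']
    simp only [e3, Finset.sum_neg_distrib]
  have hS6 : ∑ m, j m i * f k i' m = ∑ q, j q i * f k i' q := rfl
  -- distribute and finish
  simp only [sub_mul, add_mul, mul_sub, mul_add, Finset.sum_add_distrib, Finset.sum_sub_distrib]
  rw [hS1, hS2, hS3, hS4, hS5, hS7, hS8]
  ring

lemma deriv_key {n : ℕ} (J : (Fin n → ℝ) → Matrix (Fin n) (Fin n) ℝ)
    (hJsmooth : ∀ k j : Fin n, ContDiff ℝ (⊤ : ℕ∞) fun x => J x k j)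
    (hJ : ∀ x, J x * J x = -1) (x : Fin n → ℝ) :
    ∀ a b q : Fin n, ∑ s, pd (fun y => J y a s) q x * J x s b
      = -∑ s, J x a s * pd (fun y => J y s b) q x := by
  have hdiff : ∀ a b : Fin n, Differentiable ℝ fun y => J y a b :=
    fun a b => (hJsmooth a b).differentiable (by simp)
  intro a b q
  have hconst : (fun y => ∑ s, J y a s * J y s b)
      = fun _ : Fin n → ℝ => (-1 : Matrix (Fin n) (Fin n) ℝ) a b := by
    funext y
    rw [← Matrix.mul_apply, hJ]
  have h1 : fderiv ℝ (fun y => ∑ s, J y a s * J y s b) x = 0 := by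
    rw [hconst]; exact fderiv_const_apply _
  have h2 : fderiv ℝ (fun y => ∑ s : Fin n, J y a s * J y s b) x
      = ∑ s : Fin n, fderiv ℝ (fun y => J y a s * J y s b) x :=
    fderiv_fun_sum fun s _ => ((hdiff a s x).mul (hdiff s b x))
  have h3 : ∀ s : Fin n, fderiv ℝ (fun y => J y a s * J y s b) x
      = J x a s • fderiv ℝ (fun y => J y s b) x + J x s b • fderiv ℝ (fun y => J y a s) x :=
    fun s => fderiv_fun_mul (hdiff a s x) (hdiff s b x)
  simp only [h3] at h2
  rw [h1] at h2
  have h4 := congrArg (fun L : (Fin n → ℝ) →L[ℝ] ℝ => L (Pi.single q 1)) h2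
  simp only [ContinuousLinearMap.zero_apply, ContinuousLinearMap.sum_apply,
    ContinuousLinearMap.add_apply, ContinuousLinearMap.smul_apply, smul_eq_mul] at h4
  have h5 : ∑ s, (J x a s * pd (fun y => J y s b) q x + J x s b * pd (fun y => J y a s) q x) = 0 := by
    simpa [pd] using h4.symm
  rw [Finset.sum_add_distrib] at h5
  have h6 : ∑ s, J x s b * pd (fun y => J y a s) q x
      = ∑ s, pd (fun y => J y a s) q x * J x s b :=
    Finset.sum_congr rfl fun s _ => mul_comm _ _
  linarith [h5, h6]

lemma pull2 {n : ℕ} (c : ℝ) (w : Fin n → ℝ) (g : Fin n → Fin n → ℝ) (h : Fin n → ℝ) :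
    ∑ m, (c * ∑ k, w k * g k m) * h m = ∑ k, c * w k * ∑ m, g k m * h m := by
  have e : ∀ m, (c * ∑ k, w k * g k m) * h m = ∑ k, c * w k * (g k m * h m) := by
    intro m
    rw [mul_comm c, Finset.sum_mul, Finset.sum_mul]
    exact Finset.sum_congr rfl fun k _ => by ring
  simp only [e]
  rw [Finset.sum_comm]
  exact Finset.sum_congr rfl fun k _ => (Finset.mul_sum _ _ _).symm

lemma pull2' {n : ℕ} (c : ℝ) (w : Fin n → ℝ) (g : Fin n → Fin n → ℝ) (h : Fin n → ℝ) :
    ∑ m, h m * (c * ∑ k, w k * g k m) = ∑ k, c * w k * ∑ m, h m * g k m := by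
  have e : ∀ m, h m * (c * ∑ k, w k * g k m) = ∑ k, c * w k * (h m * g k m) := by
    intro m
    rw [Finset.mul_sum, Finset.mul_sum]
    exact Finset.sum_congr rfl fun k _ => by ring
  simp only [e]
  rw [Finset.sum_comm]
  exact Finset.sum_congr rfl fun k _ => (Finset.mul_sum _ _ _).symm

/-- Satô: the Satô (complete) lift of an almost complex structure is an
almost complex structure on `T*ℝ^n = ℝ^n × ℝ^n`. -/
theorem statement1 (n : ℕ)
    (J : (Fin n → ℝ) → Matrix (Fin n) (Fin n) ℝ)
    (hJsmooth : ∀ k j : Fin n, ContDiff ℝ (⊤ : ℕ∞) fun x => J x k j)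
    (hJ : ∀ x, J x * J x = -1) :
    ∀ x p : Fin n → ℝ, Sato J x p * Sato J x p = -1 := by
  intro x p
  have hjj : ∀ a b : Fin n, (∑ s, J x a s * J x s b) = if a = b then (-1:ℝ) else 0 := by
    intro a b
    rw [← Matrix.mul_apply, hJ]
    simp only [Matrix.neg_apply, Matrix.one_apply]
    split <;> simp
  have hfj := deriv_key J hJsmooth hJ x
  have hB : Bblock J x p * J x + (J x)ᵀ * Bblock J x p = 0 := by
    ext i i'
    simp only [Matrix.add_apply, Matrix.mul_apply, Matrix.transpose_apply,
      Matrix.zero_apply, Bblock, Matrix.of_apply]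
    have key := fun k => keyalg (J x) (fun a b q => pd (fun y => J y a b) q x) hjj hfj k i i'
    rw [pull2 (1/2) p (fun k m =>
          (pd (fun y => J y k i) m x - pd (fun y => J y k m) i x
            + (∑ s, ∑ q, J x k s * J x q i * pd (fun y => J y s m) q x)
            - ∑ s, ∑ q, J x k s * J x q m * pd (fun y => J y s i) q x)) (fun m => J x m i'),
        pull2' (1/2) p (fun k m =>
          (pd (fun y => J y k m) i' x - pd (fun y => J y k i') m x
            + (∑ s, ∑ q, J x k s * J x q m * pd (fun y => J y s i') q x)
            - ∑ s, ∑ q, J x k s * J x q i' * pd (fun y => J y s m) q x)) (fun m => J x m i),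
        ← Finset.sum_add_distrib]
    refine Finset.sum_eq_zero fun k _ => ?_
    rw [← mul_add, key k, mul_zero]
  -- assemble the block matrix
  rw [Sato, Matrix.fromBlocks_multiply]
  have h4 : (J x)ᵀ * (J x)ᵀ = -1 := by
    rw [← Matrix.transpose_mul, hJ]
    simp
  rw [hJ, hB, Matrix.mul_zero, zero_add, h4]
  ext (i|i) (j|j) <;> simp [Matrix.fromBlocks, Matrix.one_apply]
end
end

section
/- Let J be an almost complex structure on ℝ^n and let ∇, ∇' be two connections on ℝ^n with Christoffel symbols Γ^k_{ij} and Γ'^k_{ij}, and set L^k_{ij} := Γ'^k_{ij} − Γ^k_{ij}. Then J^{G,∇} = J^{G,∇'} as matrix fields on T*ℝ^n if and only if L(J·,·) = L(·,J·), i.e. J^l_i(x) L^k_{lj}(x) = L^k_{il}(x) J^l_j(x) for all x and all indices i,j,k. -/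
open Matrix BigOperators

noncomputable section

/-- for two connections `∇, ∇'` with difference tensor
`L^k_{ij} = Γ'^k_{ij} − Γ^k_{ij}`, one has `J^{G,∇} = J^{G,∇'}` if and only if
`L(J·,·) = L(·,J·)`, i.e. `J^l_i L^k_{lj} = L^k_{il} J^l_j` (sum over `l`). -/
theorem statement3 (n : ℕ)
    (J : (Fin n → ℝ) → Matrix (Fin n) (Fin n) ℝ)
    (Γ Γ' : (Fin n → ℝ) → Fin n → Fin n → Fin n → ℝ)
    (L : (Fin n → ℝ) → Fin n → Fin n → Fin n → ℝ)
    (hL : ∀ x k i j, L x k i j = Γ' x k i j - Γ x k i j)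
    (hJsmooth : ∀ k j : Fin n, ContDiff ℝ (⊤ : ℕ∞) fun x => J x k j)
    (hΓsmooth : ∀ k i j : Fin n, ContDiff ℝ (⊤ : ℕ∞) fun x => Γ x k i j)
    (hΓ'smooth : ∀ k i j : Fin n, ContDiff ℝ (⊤ : ℕ∞) fun x => Γ' x k i j)
    (hJ : ∀ x, J x * J x = -1) :
    (∀ x p : Fin n → ℝ, JG J Γ x p = JG J Γ' x p) ↔
      (∀ (x : Fin n → ℝ) (i j k : Fin n),
        ∑ l, J x l i * L x k l j = ∑ l, L x k i l * J x l j) := by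
  constructor
  · intro h x i j k
    have hA : ∀ p : Fin n → ℝ, Ablock J Γ x p j i = Ablock J Γ' x p j i := by
      intro p
      have h2 := Matrix.ext_iff.2 (h x p) (Sum.inr j) (Sum.inl i)
      simpa [JG, Matrix.fromBlocks] using h2
    have key := hA (Pi.single k 1)
    simp only [Ablock, Matrix.of_apply, Pi.single_apply, ite_mul, one_mul, zero_mul,
      Finset.sum_ite_eq', Finset.mem_univ, if_true] at key
    have hc : ∀ (G : Fin n → ℝ), ∑ l, J x l i * G l = ∑ l, G l * J x l i :=
      fun G => Finset.sum_congr rfl (fun l _ => mul_comm _ _)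
    simp only [hL, sub_mul, mul_sub, Finset.sum_sub_distrib]
    rw [hc, hc]
    linarith
  · intro h x p
    have hAB : Ablock J Γ x p = Ablock J Γ' x p := by
      ext i j
      simp only [Ablock, Matrix.of_apply]
      refine Finset.sum_congr rfl (fun k _ => ?_)
      congr 1
      have hk := h x j i k
      have hc : ∑ l, J x l j * L x k l i = ∑ l, L x k l i * J x l j :=
        Finset.sum_congr rfl (fun l _ => mul_comm _ _)
      rw [hc] at hk
      simp only [hL, sub_mul, mul_sub, Finset.sum_sub_distrib] at hk
      linarith
    unfold JG
    rw [hAB]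
end
end

section
/- Let J be an almost complex structure on ℝ^n and let ∇, ∇' be two connections on ℝ^n that are both almost complex (∇J = 0 and ∇'J = 0) and both minimal (their torsions equal (1/4)N_J). Then the generalized horizontal lifts coincide: J^{G,∇} = J^{G,∇'} as matrix fields on T*ℝ^n. -/
open Matrix BigOperators

noncomputable section

/-- Torsion components `T^k_{ij} = Γ^k_{ij} − Γ^k_{ji}`. -/
def torsion {n : ℕ} (Γ : (Fin n → ℝ) → Fin n → Fin n → Fin n → ℝ)
    (x : Fin n → ℝ) (k i j : Fin n) : ℝ :=
  Γ x k i j - Γ x k j i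

/-- Components of `∇J`: `(∇J)^k_{ij} = ∂x_i J^k_j − J^k_l Γ^l_{ij} + J^l_j Γ^k_{il}`. -/
def nablaJ {n : ℕ} (J : (Fin n → ℝ) → Matrix (Fin n) (Fin n) ℝ)
    (Γ : (Fin n → ℝ) → Fin n → Fin n → Fin n → ℝ)
    (x : Fin n → ℝ) (k i j : Fin n) : ℝ :=
  pd (fun y => J y k j) i x - (∑ l, J x k l * Γ x l i j) + ∑ l, J x l j * Γ x k i l

/-- Components of the Nijenhuis tensor:
`(N_J)^k_{ij} = J^l_i ∂x_l J^k_j − J^l_j ∂x_l J^k_i − J^k_l ∂x_i J^l_j + J^k_l ∂x_j J^l_i`. -/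
def nijenhuis {n : ℕ} (J : (Fin n → ℝ) → Matrix (Fin n) (Fin n) ℝ)
    (x : Fin n → ℝ) (k i j : Fin n) : ℝ :=
  (∑ l, J x l i * pd (fun y => J y k j) l x) - (∑ l, J x l j * pd (fun y => J y k i) l x)
    - (∑ l, J x k l * pd (fun y => J y l j) i x) + ∑ l, J x k l * pd (fun y => J y l i) j x

/-- two almost complex (`∇J = 0`) and minimal (`T = (1/4)N_J`) connections
give the same generalized horizontal lift. -/
theorem statement4 (n : ℕ)
    (J : (Fin n → ℝ) → Matrix (Fin n) (Fin n) ℝ)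
    (Γ Γ' : (Fin n → ℝ) → Fin n → Fin n → Fin n → ℝ)
    (hJsmooth : ∀ k j : Fin n, ContDiff ℝ (⊤ : ℕ∞) fun x => J x k j)
    (hΓsmooth : ∀ k i j : Fin n, ContDiff ℝ (⊤ : ℕ∞) fun x => Γ x k i j)
    (hΓ'smooth : ∀ k i j : Fin n, ContDiff ℝ (⊤ : ℕ∞) fun x => Γ' x k i j)
    (hJ : ∀ x, J x * J x = -1)
    (hac : ∀ x k i j, nablaJ J Γ x k i j = 0)
    (hac' : ∀ x k i j, nablaJ J Γ' x k i j = 0)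
    (hmin : ∀ x k i j, torsion Γ x k i j = (1 / 4) * nijenhuis J x k i j)
    (hmin' : ∀ x k i j, torsion Γ' x k i j = (1 / 4) * nijenhuis J x k i j) :
    ∀ x p : Fin n → ℝ, JG J Γ x p = JG J Γ' x p := by
  intro x p
  have hT : ∀ k i j : Fin n, Γ x k i j - Γ' x k i j = Γ x k j i - Γ' x k j i := by
    intro k i j
    have h1 := hmin x k i j
    have h2 := hmin' x k i j
    unfold torsion at h1 h2
    linarith
  have hD : ∀ k i j : Fin n, ∑ l, J x l j * (Γ x k i l - Γ' x k i l)
      = ∑ l, J x k l * (Γ x l i j - Γ' x l i j) := by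
    intro k i j
    have h1 := hac x k i j
    have h2 := hac' x k i j
    unfold nablaJ at h1 h2
    simp only [mul_sub, Finset.sum_sub_distrib]
    linarith
  have key : ∀ k i j : Fin n,
      ((∑ l, Γ x k l i * J x l j) - ∑ l, Γ x k j l * J x l i)
      = (∑ l, Γ' x k l i * J x l j) - ∑ l, Γ' x k j l * J x l i := by
    intro k i j
    have main : ∑ l, J x l j * (Γ x k l i - Γ' x k l i)
        = ∑ l, J x l i * (Γ x k j l - Γ' x k j l) := by
      calc ∑ l, J x l j * (Γ x k l i - Γ' x k l i)
          = ∑ l, J x l j * (Γ x k i l - Γ' x k i l) :=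
            Finset.sum_congr rfl fun l _ => by rw [hT]
        _ = ∑ l, J x k l * (Γ x l i j - Γ' x l i j) := hD k i j
        _ = ∑ l, J x k l * (Γ x l j i - Γ' x l j i) :=
            Finset.sum_congr rfl fun l _ => by rw [hT]
        _ = ∑ l, J x l i * (Γ x k j l - Γ' x k j l) := (hD k j i).symm
    simp only [mul_sub, Finset.sum_sub_distrib] at main
    have c1 : ∑ l, Γ x k l i * J x l j = ∑ l, J x l j * Γ x k l i :=
      Finset.sum_congr rfl fun l _ => mul_comm _ _
    have c2 : ∑ l, Γ' x k l i * J x l j = ∑ l, J x l j * Γ' x k l i :=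
      Finset.sum_congr rfl fun l _ => mul_comm _ _
    have c3 : ∑ l, Γ x k j l * J x l i = ∑ l, J x l i * Γ x k j l :=
      Finset.sum_congr rfl fun l _ => mul_comm _ _
    have c4 : ∑ l, Γ' x k j l * J x l i = ∑ l, J x l i * Γ' x k j l :=
      Finset.sum_congr rfl fun l _ => mul_comm _ _
    linarith
  have hA : Ablock J Γ x p = Ablock J Γ' x p := by
    ext i j
    unfold Ablock
    simp only [Matrix.of_apply]
    exact Finset.sum_congr rfl fun k _ => by rw [key k i j]
  unfold JG
  rw [hA]
end
end

section
/- Let J be an almost complex structure and ∇ a connection on ℝ^n. Then J^{G,∇} = J̃ (equality of matrix fields on T*ℝ^n) if and only if S = −(1/2)JN_J, i.e. S^k_{ij}(x) = −(1/2)(JN_J)^k_{ij}(x) for all x and all indices i,j,k. -/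
open Matrix BigOperators

noncomputable section

/-- Components of the tensor `S`:
`S^k_{ij} = −(∇J)^k_{ij} + (∇J)^k_{ji} + J^l_i T^k_{lj} − J^k_l T^l_{ij}`. -/
def Stens {n : ℕ} (J : (Fin n → ℝ) → Matrix (Fin n) (Fin n) ℝ)
    (Γ : (Fin n → ℝ) → Fin n → Fin n → Fin n → ℝ)
    (x : Fin n → ℝ) (k i j : Fin n) : ℝ :=
  -nablaJ J Γ x k i j + nablaJ J Γ x k j i
    + (∑ l, J x l i * torsion Γ x k l j) - ∑ l, J x k l * torsion Γ x l i j

/-- Auxiliary: contraction with `J² = -1`. -/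
lemma contract_aux {n : ℕ} (a : Matrix (Fin n) (Fin n) ℝ) (ha : a * a = -1) (k : Fin n)
    (f : Fin n → ℝ) : ∑ s, ∑ l, a k s * (a s l * f l) = - f k := by
  rw [Finset.sum_comm]
  have h : ∀ l, ∑ s, a k s * (a s l * f l) = (a * a) k l * f l := by
    intro l
    rw [Matrix.mul_apply, Finset.sum_mul]
    exact Finset.sum_congr rfl fun s _ => by ring
  simp_rw [h, ha]
  simp [Matrix.neg_apply, Matrix.one_apply, ite_mul]

/-- Coefficient of `p_k` in entry `(j,i)` of `Ablock`. -/
def Ac {n : ℕ} (J : (Fin n → ℝ) → Matrix (Fin n) (Fin n) ℝ)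
    (Γ : (Fin n → ℝ) → Fin n → Fin n → Fin n → ℝ) (x : Fin n → ℝ) (k i j : Fin n) : ℝ :=
  (∑ l, Γ x k l j * J x l i) - ∑ l, Γ x k i l * J x l j

/-- Coefficient of `p_k` in entry `(j,i)` of `Bblock`. -/
def Bc {n : ℕ} (J : (Fin n → ℝ) → Matrix (Fin n) (Fin n) ℝ) (x : Fin n → ℝ)
    (k i j : Fin n) : ℝ :=
  (1 / 2) * (pd (fun y => J y k j) i x - pd (fun y => J y k i) j x
      + (∑ s, ∑ q, J x k s * J x q j * pd (fun y => J y s i) q x)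
      - ∑ s, ∑ q, J x k s * J x q i * pd (fun y => J y s j) q x)

lemma Stens_eq_Ac {n : ℕ} (J : (Fin n → ℝ) → Matrix (Fin n) (Fin n) ℝ)
    (Γ : (Fin n → ℝ) → Fin n → Fin n → Fin n → ℝ) (x : Fin n → ℝ) (i j k : Fin n) :
    Stens J Γ x k i j
      = Ac J Γ x k i j + (pd (fun y => J y k i) j x - pd (fun y => J y k j) i x) := by
  simp only [Stens, nablaJ, torsion, Ac, mul_sub, Finset.sum_sub_distrib]
  rw [show (∑ l, Γ x k l j * J x l i) = ∑ l, J x l i * Γ x k l j from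
      Finset.sum_congr rfl fun l _ => mul_comm _ _,
    show (∑ l, Γ x k i l * J x l j) = ∑ l, J x l j * Γ x k i l from
      Finset.sum_congr rfl fun l _ => mul_comm _ _]
  ring

lemma JN_eq_Bc {n : ℕ} (J : (Fin n → ℝ) → Matrix (Fin n) (Fin n) ℝ) (x : Fin n → ℝ)
    (hJ : J x * J x = -1) (i j k : Fin n) :
    -(1 / 2) * ∑ s, J x k s * nijenhuis J x s i j
      = Bc J x k i j + (pd (fun y => J y k i) j x - pd (fun y => J y k j) i x) := by
  have hc1 := contract_aux (J x) hJ k (fun l => pd (fun y => J y l j) i x)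
  have hc2 := contract_aux (J x) hJ k (fun l => pd (fun y => J y l i) j x)
  simp only [← mul_assoc] at hc1 hc2
  have expand : ∑ s, J x k s * nijenhuis J x s i j
      = (∑ s, ∑ q, J x k s * J x q i * pd (fun y => J y s j) q x)
        - (∑ s, ∑ q, J x k s * J x q j * pd (fun y => J y s i) q x)
        + pd (fun y => J y k j) i x - pd (fun y => J y k i) j x := by
    simp only [nijenhuis, mul_sub, mul_add, Finset.mul_sum, Finset.sum_sub_distrib,
      Finset.sum_add_distrib]
    simp only [← mul_assoc]
    rw [hc1, hc2]
    ring
  rw [expand, Bc]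
  ring

lemma Ablock_entry {n : ℕ} (J : (Fin n → ℝ) → Matrix (Fin n) (Fin n) ℝ)
    (Γ : (Fin n → ℝ) → Fin n → Fin n → Fin n → ℝ) (x p : Fin n → ℝ) (i j : Fin n) :
    Ablock J Γ x p j i = ∑ k, p k * Ac J Γ x k i j := rfl

lemma Bblock_entry {n : ℕ} (J : (Fin n → ℝ) → Matrix (Fin n) (Fin n) ℝ)
    (x p : Fin n → ℝ) (i j : Fin n) :
    Bblock J x p j i = ∑ k, p k * Bc J x k i j := by
  simp only [Bblock, Bc, Matrix.of_apply, Finset.mul_sum]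
  exact Finset.sum_congr rfl fun k _ => by ring

/-- `J^{G,∇} = J̃` if and only if `S = −(1/2) J N_J`. -/
theorem statement5 (n : ℕ)
    (J : (Fin n → ℝ) → Matrix (Fin n) (Fin n) ℝ)
    (Γ : (Fin n → ℝ) → Fin n → Fin n → Fin n → ℝ)
    (hJsmooth : ∀ k j : Fin n, ContDiff ℝ (⊤ : ℕ∞) fun x => J x k j)
    (hΓsmooth : ∀ k i j : Fin n, ContDiff ℝ (⊤ : ℕ∞) fun x => Γ x k i j)
    (hJ : ∀ x, J x * J x = -1) :
    (∀ x p : Fin n → ℝ, JG J Γ x p = Sato J x p) ↔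
      (∀ (x : Fin n → ℝ) (i j k : Fin n),
        Stens J Γ x k i j = -(1 / 2) * ∑ s, J x k s * nijenhuis J x s i j) := by
  constructor
  · intro h x i j k
    have hm := h x (Pi.single k 1)
    have hb : Ablock J Γ x (Pi.single k 1) j i = Bblock J x (Pi.single k 1) j i := by
      have := congrFun (congrFun hm (Sum.inr j)) (Sum.inl i)
      simpa [JG, Sato, Matrix.fromBlocks] using this
    rw [Ablock_entry, Bblock_entry] at hb
    simp only [Pi.single_apply, ite_mul, one_mul, zero_mul, Finset.sum_ite_eq',
      Finset.mem_univ, if_true] at hb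
    rw [Stens_eq_Ac, JN_eq_Bc J x (hJ x), hb]
  · intro h x p
    have hAB : ∀ k i j : Fin n, Ac J Γ x k i j = Bc J x k i j := by
      intro k i j
      have h1 := Stens_eq_Ac J Γ x i j k
      have h2 := JN_eq_Bc J x (hJ x) i j k
      have h3 := h x i j k
      linarith [h1, h2, h3]
    ext a b
    rcases a with a | a <;> rcases b with b | b <;>
      simp only [JG, Sato, Matrix.fromBlocks_apply₁₁, Matrix.fromBlocks_apply₁₂,
        Matrix.fromBlocks_apply₂₁, Matrix.fromBlocks_apply₂₂]
    rw [Ablock_entry J Γ x p b a, Bblock_entry J x p b a]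
    exact Finset.sum_congr rfl fun k _ => by rw [hAB]
end
end

section
/- Let J be an almost complex structure and ∇ a connection on ℝ^n. Then the generalized horizontal lift admits the tensorial expression J^{G,∇} = J^c + γ(S); concretely, A^i_j(x,p) = p_k(∂x_j J^k_i − ∂x_i J^k_j) + p_k S^k_{ji}(x) for all (x,p) and all indices i,j, where A is the lower-left block of J^{G,∇}. -/
open Matrix BigOperators

noncomputable section

/-- the tensorial expression `J^{G,∇} = J^c + γ(S)`; on the lower-left
blocks this reads `A^i_j(x,p) = p_k(∂x_j J^k_i − ∂x_i J^k_j) + p_k S^k_{ji}(x)`. -/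
theorem statement9 (n : ℕ)
    (J : (Fin n → ℝ) → Matrix (Fin n) (Fin n) ℝ)
    (Γ : (Fin n → ℝ) → Fin n → Fin n → Fin n → ℝ)
    (hJsmooth : ∀ k j : Fin n, ContDiff ℝ (⊤ : ℕ∞) fun x => J x k j)
    (hΓsmooth : ∀ k i j : Fin n, ContDiff ℝ (⊤ : ℕ∞) fun x => Γ x k i j)
    (hJ : ∀ x, J x * J x = -1) :
    ∀ (x p : Fin n → ℝ) (i j : Fin n),
      Ablock J Γ x p i j =
        (∑ k, p k * (pd (fun y => J y k i) j x - pd (fun y => J y k j) i x))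
          + ∑ k, p k * Stens J Γ x k j i := by
  intro x p i j
  rw [← Finset.sum_add_distrib]
  show ∑ k, p k * ((∑ l, Γ x k l i * J x l j) - ∑ l, Γ x k j l * J x l i) = _
  refine Finset.sum_congr rfl fun k _ => ?_
  have h : ∀ a b : Fin n → ℝ, (∑ l : Fin n, a l * b l) = ∑ l : Fin n, b l * a l := by
    intro a b; exact Finset.sum_congr rfl fun l _ => mul_comm _ _
  simp only [Stens, nablaJ, torsion, mul_sub, Finset.sum_sub_distrib]
  rw [h (fun l => Γ x k l i) (fun l => J x l j),
      h (fun l => Γ x k j l) (fun l => J x l i)]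
  ring
end
end

section
/- Let (J₁,∇₁) and (J₂,∇₂) be almost complex structures with connections on open subsets U and V of ℝ^n respectively, with associated tensors S₁, S₂, and let f : U → V be a smooth diffeomorphism. Then the cotangent lift f̃ is (J₁^{G,∇₁}, J₂^{G,∇₂})-holomorphic if and only if f is (J₁,J₂)-holomorphic and f_*S₁ = S₂, i.e. (d_x f)^k_m S₁(x)^m_{ij} = S₂(f(x))^k_{ml}(d_x f)^m_i (d_x f)^l_j for all x ∈ U and all indices i,j,k. -/
open Matrix BigOperators

noncomputable section

/-- Jacobian matrix `(d_x f)^k_i = ∂x_i f^k` of a map `f : ℝ^n → ℝ^n`. -/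
def Dmat {n : ℕ} (f : (Fin n → ℝ) → (Fin n → ℝ)) (x : Fin n → ℝ) :
    Matrix (Fin n) (Fin n) ℝ :=
  Matrix.of fun k i => pd (fun y => f y k) i x

/-- Cotangent lift `f̃(x,p) = (f(x), ᵗ((d_x f)^{−1}) p)` of a diffeomorphism. -/
def cotLift {n : ℕ} (f : (Fin n → ℝ) → (Fin n → ℝ)) :
    (Fin n → ℝ) × (Fin n → ℝ) → (Fin n → ℝ) × (Fin n → ℝ) :=
  fun w => (f w.1, ((Dmat f w.1)⁻¹)ᵀ.mulVec w.2)

/-- The generalized horizontal lift `J^{G,∇}(x,p)`, acting on tangent vectors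
`(X,P)` of `T*ℝ^n = ℝ^n × ℝ^n` by `(X,P) ↦ (J X, A X + ᵗJ P)`. -/
def JGmap {n : ℕ} (J : (Fin n → ℝ) → Matrix (Fin n) (Fin n) ℝ)
    (Γ : (Fin n → ℝ) → Fin n → Fin n → Fin n → ℝ) (x p : Fin n → ℝ) :
    (Fin n → ℝ) × (Fin n → ℝ) → (Fin n → ℝ) × (Fin n → ℝ) :=
  fun v => ((J x).mulVec v.1, (Ablock J Γ x p).mulVec v.1 + (J x)ᵀ.mulVec v.2)

namespace Aux


variable {n : ℕ}

/-- derivative applied to a vector, in terms of `pd`. -/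
lemma fderiv_apply_eq_sum {h : (Fin n → ℝ) → ℝ} {x : Fin n → ℝ}
    (hd : DifferentiableAt ℝ h x) (u : Fin n → ℝ) :
    fderiv ℝ h x u = ∑ j, pd h j x * u j := by
  have hu : u = ∑ j, u j • (Pi.single j (1 : ℝ) : Fin n → ℝ) := by
    ext k
    simp [Finset.sum_apply, Pi.single_apply, eq_comm]
  conv_lhs => rw [hu]
  rw [map_sum]
  refine Finset.sum_congr rfl fun j _ => ?_
  rw [_root_.map_smul]
  simp [pd, mul_comm]

lemma fderiv_vec_apply {f : (Fin n → ℝ) → (Fin n → ℝ)} {x : Fin n → ℝ}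
    (hd : ∀ k, DifferentiableAt ℝ (fun y => f y k) x) (u : Fin n → ℝ) (k : Fin n) :
    fderiv ℝ f x u k = ∑ j, Dmat f x k j * u j := by
  have : fderiv ℝ f x = ContinuousLinearMap.pi fun k => fderiv ℝ (fun y => f y k) x :=
    fderiv_pi hd
  rw [this, ContinuousLinearMap.pi_apply, fderiv_apply_eq_sum (hd k)]
  rfl

/-- chain rule for `pd`. -/
lemma pd_comp {h : (Fin n → ℝ) → ℝ} {f : (Fin n → ℝ) → (Fin n → ℝ)} {x : Fin n → ℝ}
    (hh : DifferentiableAt ℝ h (f x)) (hf : DifferentiableAt ℝ f x) (i : Fin n) :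
    pd (fun y => h (f y)) i x = ∑ m, pd h m (f x) * Dmat f x m i := by
  have hcomp : fderiv ℝ (h ∘ f) x = (fderiv ℝ h (f x)).comp (fderiv ℝ f x) :=
    fderiv_comp x hh hf
  have hd : ∀ k, DifferentiableAt ℝ (fun y => f y k) x := fun k =>
    (ContinuousLinearMap.proj k : (Fin n → ℝ) →L[ℝ] ℝ).differentiableAt.comp x hf
  have : pd (fun y => h (f y)) i x = fderiv ℝ h (f x) (fderiv ℝ f x (Pi.single i 1)) := by
    rw [pd]
    show fderiv ℝ (h ∘ f) x (Pi.single i 1) = _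
    rw [hcomp]; rfl
  rw [this, fderiv_apply_eq_sum hh]
  refine Finset.sum_congr rfl fun m _ => ?_
  congr 1
  rw [fderiv_vec_apply hd]
  simp [Pi.single_apply, Finset.sum_ite_eq', Dmat]


variable {n : ℕ}

lemma contDiffOn_comp_proj {f : (Fin n → ℝ) → (Fin n → ℝ)} {U : Set (Fin n → ℝ)}
    (hf : ContDiffOn ℝ (⊤ : ℕ∞) f U) (k : Fin n) :
    ContDiffOn ℝ (⊤ : ℕ∞) (fun y => f y k) U :=
  (ContinuousLinearMap.proj k : (Fin n → ℝ) →L[ℝ] ℝ).contDiff.comp_contDiffOn hf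

/-- smoothness of entries of the Jacobian on an open set. -/
lemma contDiffOn_Dmat {f : (Fin n → ℝ) → (Fin n → ℝ)} {U : Set (Fin n → ℝ)}
    (hU : IsOpen U) (hf : ContDiffOn ℝ (⊤ : ℕ∞) f U) (k i : Fin n) :
    ContDiffOn ℝ (⊤ : ℕ∞) (fun y => Dmat f y k i) U := by
  have h1 : ContDiffOn ℝ (⊤ : ℕ∞) (fun y => f y k) U := contDiffOn_comp_proj hf k
  have h2 : ContDiffOn ℝ (⊤ : ℕ∞) (fderivWithin ℝ (fun y => f y k) U) U :=
    h1.fderivWithin hU.uniqueDiffOn (by simp)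
  have h3 : ContDiffOn ℝ (⊤ : ℕ∞)
      (fun y => (ContinuousLinearMap.apply ℝ ℝ (Pi.single i (1:ℝ)))
        (fderivWithin ℝ (fun y => f y k) U y)) U :=
    ((ContinuousLinearMap.apply ℝ ℝ (Pi.single i (1:ℝ))).contDiff.comp_contDiffOn h2 :)
  refine h3.congr fun y hy => ?_
  simp only [Dmat, Matrix.of_apply, pd, ContinuousLinearMap.apply_apply]
  rw [fderivWithin_of_isOpen hU hy]

lemma diffAt {h : (Fin n → ℝ) → ℝ} {U : Set (Fin n → ℝ)} {x : Fin n → ℝ}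
    (hU : IsOpen U) (hx : x ∈ U) (hh : ContDiffOn ℝ (⊤ : ℕ∞) h U) :
    DifferentiableAt ℝ h x :=
  (hh.contDiffAt (hU.mem_nhds hx)).differentiableAt (by simp)

lemma diffAt_vec {f : (Fin n → ℝ) → (Fin n → ℝ)} {U : Set (Fin n → ℝ)} {x : Fin n → ℝ}
    (hU : IsOpen U) (hx : x ∈ U) (hf : ContDiffOn ℝ (⊤ : ℕ∞) f U) :
    DifferentiableAt ℝ f x :=
  (hf.contDiffAt (hU.mem_nhds hx)).differentiableAt (by simp)


variable {n : ℕ}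

section Diffeo
variable {U V : Set (Fin n → ℝ)} {f g : (Fin n → ℝ) → (Fin n → ℝ)}

/-- chain rule: left-inverse Jacobian. -/
lemma DgDf_one (hU : IsOpen U) (hV : IsOpen V)
    (hf : ContDiffOn ℝ (⊤ : ℕ∞) f U) (hg : ContDiffOn ℝ (⊤ : ℕ∞) g V) (hfU : Set.MapsTo f U V)
    (hgf : ∀ x ∈ U, g (f x) = x) {x : Fin n → ℝ} (hx : x ∈ U) :
    Dmat g (f x) * Dmat f x = 1 := by
  ext k i
  rw [Matrix.mul_apply]
  have h1 : ∑ m, Dmat g (f x) k m * Dmat f x m i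
      = pd (fun y => g (f y) k) i x := by
    rw [pd_comp (diffAt hV (hfU hx) (contDiffOn_comp_proj hg k)) (diffAt_vec hU hx hf) i]
    rfl
  rw [h1]
  have h2 : (fun y => g (f y) k) =ᶠ[nhds x] (fun y : Fin n → ℝ => y k) :=
    Filter.eventuallyEq_of_mem (hU.mem_nhds hx) (fun y hy => by simp [hgf y hy])
  rw [pd, h2.fderiv_eq]
  have h3 : fderiv ℝ (fun y : Fin n → ℝ => y k) x
      = (ContinuousLinearMap.proj k : (Fin n → ℝ) →L[ℝ] ℝ) :=
    (ContinuousLinearMap.proj k : (Fin n → ℝ) →L[ℝ] ℝ).fderiv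
  rw [h3]
  simp [Matrix.one_apply, Pi.single_apply, eq_comm]

lemma inv_Dmat (hU : IsOpen U) (hV : IsOpen V)
    (hf : ContDiffOn ℝ (⊤ : ℕ∞) f U) (hg : ContDiffOn ℝ (⊤ : ℕ∞) g V) (hfU : Set.MapsTo f U V)
    (hgf : ∀ x ∈ U, g (f x) = x) {x : Fin n → ℝ} (hx : x ∈ U) :
    (Dmat f x)⁻¹ = Dmat g (f x) :=
  Matrix.inv_eq_left_inv (DgDf_one hU hV hf hg hfU hgf hx)

lemma DfDg_one (hU : IsOpen U) (hV : IsOpen V)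
    (hf : ContDiffOn ℝ (⊤ : ℕ∞) f U) (hg : ContDiffOn ℝ (⊤ : ℕ∞) g V) (hfU : Set.MapsTo f U V)
    (hgV : Set.MapsTo g V U) (hgf : ∀ x ∈ U, g (f x) = x) (hfg : ∀ y ∈ V, f (g y) = y)
    {x : Fin n → ℝ} (hx : x ∈ U) :
    Dmat f x * Dmat g (f x) = 1 := by
  have := DgDf_one hV hU hg hf hgV hfg (hfU hx)
  rwa [hgf x hx] at this

/-- local form of the cotangent lift. -/
lemma cotLift_eventuallyEq (hU : IsOpen U) (hV : IsOpen V)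
    (hf : ContDiffOn ℝ (⊤ : ℕ∞) f U) (hg : ContDiffOn ℝ (⊤ : ℕ∞) g V) (hfU : Set.MapsTo f U V)
    (hgf : ∀ x ∈ U, g (f x) = x) {x : Fin n → ℝ} (hx : x ∈ U) (p : Fin n → ℝ) :
    cotLift f =ᶠ[nhds (x, p)]
      (fun w => (f w.1, fun i => ∑ a, Dmat g (f w.1) a i * w.2 a)) := by
  have hmem : (U ×ˢ (Set.univ : Set (Fin n → ℝ))) ∈ nhds (x, p) :=
    (hU.prod isOpen_univ).mem_nhds ⟨hx, trivial⟩
  refine Filter.eventuallyEq_of_mem hmem (fun w hw => ?_)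
  have hw1 : w.1 ∈ U := hw.1
  unfold cotLift
  refine Prod.ext rfl ?_
  show ((Dmat f w.1)⁻¹)ᵀ.mulVec w.2 = _
  rw [inv_Dmat hU hV hf hg hfU hgf hw1]
  funext i
  simp [Matrix.mulVec, dotProduct, Matrix.transpose_apply]

/-- the derivative of the cotangent lift, applied to a tangent vector. -/
lemma fderiv_cotLift (hU : IsOpen U) (hV : IsOpen V)
    (hf : ContDiffOn ℝ (⊤ : ℕ∞) f U) (hg : ContDiffOn ℝ (⊤ : ℕ∞) g V) (hfU : Set.MapsTo f U V)
    (hgf : ∀ x ∈ U, g (f x) = x) {x : Fin n → ℝ} (hx : x ∈ U) (p : Fin n → ℝ)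
    (v : (Fin n → ℝ) × (Fin n → ℝ)) :
    fderiv ℝ (cotLift f) (x, p) v
      = ((Dmat f x).mulVec v.1,
         fun i => (∑ a, (∑ s, pd (fun y => Dmat g (f y) a i) s x * v.1 s) * p a)
           + ∑ a, Dmat g (f x) a i * v.2 a) := by
  have hQcd : ∀ a i : Fin n, ContDiffOn ℝ (⊤ : ℕ∞) (fun y => Dmat g (f y) a i) U := by
    intro a i
    have := (contDiffOn_Dmat hV hg a i).comp hf hfU
    exact this
  have hcongr := (cotLift_eventuallyEq hU hV hf hg hfU hgf hx p).fderiv_eq (𝕜 := ℝ)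
  rw [hcongr]
  -- derivative of the first component
  have h1 : HasFDerivAt (fun w : (Fin n → ℝ) × (Fin n → ℝ) => f w.1)
      ((fderiv ℝ f x).comp (ContinuousLinearMap.fst ℝ (Fin n → ℝ) (Fin n → ℝ))) (x, p) :=
    (diffAt_vec hU hx hf).hasFDerivAt.comp (x, p)
      (hasFDerivAt_fst : HasFDerivAt Prod.fst
        (ContinuousLinearMap.fst ℝ (Fin n → ℝ) (Fin n → ℝ)) (x, p))
  -- derivative of the second component, componentwise
  have h2 : ∀ i : Fin n, HasFDerivAt
      (fun w : (Fin n → ℝ) × (Fin n → ℝ) => ∑ a, Dmat g (f w.1) a i * w.2 a)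
      (∑ a, (Dmat g (f x) a i •
          ((ContinuousLinearMap.proj a).comp
            (ContinuousLinearMap.snd ℝ (Fin n → ℝ) (Fin n → ℝ)))
        + p a • ((fderiv ℝ (fun y => Dmat g (f y) a i) x).comp
            (ContinuousLinearMap.fst ℝ (Fin n → ℝ) (Fin n → ℝ))))) (x, p) := by
    intro i
    refine HasFDerivAt.fun_sum (fun a _ => ?_)
    have hc : HasFDerivAt (fun w : (Fin n → ℝ) × (Fin n → ℝ) => Dmat g (f w.1) a i)
        ((fderiv ℝ (fun y => Dmat g (f y) a i) x).comp
          (ContinuousLinearMap.fst ℝ (Fin n → ℝ) (Fin n → ℝ))) (x, p) := by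
      have := (diffAt hU hx (hQcd a i)).hasFDerivAt.comp (x, p)
        (hasFDerivAt_fst : HasFDerivAt Prod.fst
          (ContinuousLinearMap.fst ℝ (Fin n → ℝ) (Fin n → ℝ)) (x, p))
      exact this
    have hd : HasFDerivAt (fun w : (Fin n → ℝ) × (Fin n → ℝ) => w.2 a)
        ((ContinuousLinearMap.proj a).comp
          (ContinuousLinearMap.snd ℝ (Fin n → ℝ) (Fin n → ℝ))) (x, p) :=
      ((ContinuousLinearMap.proj a).comp
          (ContinuousLinearMap.snd ℝ (Fin n → ℝ) (Fin n → ℝ))).hasFDerivAt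
    simpa using hc.fun_mul hd
  have h2' : HasFDerivAt
      (fun w : (Fin n → ℝ) × (Fin n → ℝ) => (fun i => ∑ a, Dmat g (f w.1) a i * w.2 a))
      (ContinuousLinearMap.pi fun i => (∑ a, (Dmat g (f x) a i •
          ((ContinuousLinearMap.proj a).comp
            (ContinuousLinearMap.snd ℝ (Fin n → ℝ) (Fin n → ℝ)))
        + p a • ((fderiv ℝ (fun y => Dmat g (f y) a i) x).comp
            (ContinuousLinearMap.fst ℝ (Fin n → ℝ) (Fin n → ℝ)))))) (x, p) :=
    hasFDerivAt_pi.2 h2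
  have hF := (h1.prodMk h2').fderiv
  rw [hF]
  refine Prod.ext ?_ ?_
  · show fderiv ℝ f x v.1 = (Dmat f x).mulVec v.1
    funext k
    rw [fderiv_vec_apply (fun k => diffAt hU hx (contDiffOn_comp_proj hf k)) v.1 k]
    simp [Matrix.mulVec, dotProduct]
  · show (ContinuousLinearMap.pi _) v = _
    funext i
    rw [ContinuousLinearMap.pi_apply]
    simp only [ContinuousLinearMap.sum_apply, ContinuousLinearMap.add_apply,
      ContinuousLinearMap.smul_apply, ContinuousLinearMap.comp_apply,
      ContinuousLinearMap.coe_fst', ContinuousLinearMap.coe_snd',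
      ContinuousLinearMap.proj_apply, smul_eq_mul]
    rw [Finset.sum_add_distrib]
    rw [add_comm]
    congr 1
    refine Finset.sum_congr rfl fun a _ => ?_
    rw [fderiv_apply_eq_sum (diffAt hU hx (hQcd a i)) v.1]
    ring
end Diffeo

variable {n : ℕ}

/-- product rule for `pd` of a finite sum of products. -/
lemma pd_sum_mul {φ ψ : Fin n → (Fin n → ℝ) → ℝ} {x : Fin n → ℝ}
    (hφ : ∀ m, DifferentiableAt ℝ (φ m) x) (hψ : ∀ m, DifferentiableAt ℝ (ψ m) x)
    (s : Fin n) :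
    pd (fun y => ∑ m, φ m y * ψ m y) s x
      = ∑ m, (φ m x * pd (ψ m) s x + ψ m x * pd (φ m) s x) := by
  have hh : HasFDerivAt (fun y => ∑ m, φ m y * ψ m y)
      (∑ m, (φ m x • fderiv ℝ (ψ m) x + ψ m x • fderiv ℝ (φ m) x)) x :=
    HasFDerivAt.fun_sum fun m _ => ((hφ m).hasFDerivAt.mul (hψ m).hasFDerivAt)
  rw [pd, hh.fderiv]
  simp [pd, ContinuousLinearMap.sum_apply]

section Diffeo
variable {U V : Set (Fin n → ℝ)} {f g : (Fin n → ℝ) → (Fin n → ℝ)}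

/-- derivative of the inverse Jacobian relation. -/
lemma dE_rel (hU : IsOpen U) (hV : IsOpen V)
    (hf : ContDiffOn ℝ (⊤ : ℕ∞) f U) (hg : ContDiffOn ℝ (⊤ : ℕ∞) g V) (hfU : Set.MapsTo f U V)
    (hgf : ∀ x ∈ U, g (f x) = x) {x : Fin n → ℝ} (hx : x ∈ U) (s a i : Fin n) :
    ∑ m, (Dmat g (f x) a m * pd (fun y => Dmat f y m i) s x
      + Dmat f x m i * pd (fun y => Dmat g (f y) a m) s x) = 0 := by
  have hQcd : ∀ a m : Fin n, ContDiffOn ℝ (⊤ : ℕ∞) (fun y => Dmat g (f y) a m) U := by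
    intro a m
    have := (contDiffOn_Dmat hV hg a m).comp hf hfU
    exact this
  have heq : (fun y => ∑ m, Dmat g (f y) a m * Dmat f y m i)
      =ᶠ[nhds x] (fun _ => ((1 : Matrix (Fin n) (Fin n) ℝ) a i)) := by
    refine Filter.eventuallyEq_of_mem (hU.mem_nhds hx) (fun y hy => ?_)
    have := DgDf_one hU hV hf hg hfU hgf hy
    calc ∑ m, Dmat g (f y) a m * Dmat f y m i
        = (Dmat g (f y) * Dmat f y) a i := (Matrix.mul_apply).symm
      _ = (1 : Matrix (Fin n) (Fin n) ℝ) a i := by rw [this]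
  have h0 : pd (fun y => ∑ m, Dmat g (f y) a m * Dmat f y m i) s x = 0 := by
    rw [pd, heq.fderiv_eq (𝕜 := ℝ), fderiv_const_apply]
    simp
  rw [pd_sum_mul (fun m => diffAt hU hx (hQcd a m))
    (fun m => diffAt hU hx (contDiffOn_Dmat hU hf m i)) s] at h0
  exact h0

/-- symmetry of the Hessian. -/
lemma H_symm (hU : IsOpen U) (hf : ContDiffOn ℝ (⊤ : ℕ∞) f U) {x : Fin n → ℝ} (hx : x ∈ U)
    (k s i : Fin n) :
    pd (fun y => Dmat f y k i) s x = pd (fun y => Dmat f y k s) i x := by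
  set h : (Fin n → ℝ) → ℝ := fun y => f y k with hh
  have hcd : ContDiffOn ℝ (⊤ : ℕ∞) h U := contDiffOn_comp_proj hf k
  have hfd : ContDiffOn ℝ (⊤ : ℕ∞) (fderiv ℝ h) U := by
    have hw : ContDiffOn ℝ (⊤ : ℕ∞) (fderivWithin ℝ h U) U :=
      hcd.fderivWithin hU.uniqueDiffOn (by simp)
    exact hw.congr (fun y hy => (fderivWithin_of_isOpen hU hy).symm)
  have hdiff : DifferentiableAt ℝ (fderiv ℝ h) x :=
    ((hfd.contDiffAt (hU.mem_nhds hx)).differentiableAt (by simp))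
  have key : ∀ c : Fin n → ℝ, ∀ u : Fin n → ℝ,
      fderiv ℝ (fun y => fderiv ℝ h y c) x u = fderiv ℝ (fderiv ℝ h) x u c := by
    intro c u
    have hL := ((ContinuousLinearMap.apply ℝ ℝ c).hasFDerivAt.comp x hdiff.hasFDerivAt)
    have hL' : HasFDerivAt (fun y => fderiv ℝ h y c)
        (((ContinuousLinearMap.apply ℝ ℝ c)).comp (fderiv ℝ (fderiv ℝ h) x)) x := hL
    rw [hL'.fderiv]
    rfl
  have hsymm : IsSymmSndFDerivAt ℝ h x :=
    (hcd.contDiffAt (hU.mem_nhds hx)).isSymmSndFDerivAt ((by rw [minSmoothness_of_isRCLikeNormedField]; exact WithTop.coe_le_coe.mpr le_top))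
  have h1 : pd (fun y => Dmat f y k i) s x
      = fderiv ℝ (fderiv ℝ h) x (Pi.single s 1) (Pi.single i 1) := by
    rw [pd]
    have : (fun y => Dmat f y k i) = fun y => fderiv ℝ h y (Pi.single i 1) := rfl
    rw [this, key]
  have h2 : pd (fun y => Dmat f y k s) i x
      = fderiv ℝ (fderiv ℝ h) x (Pi.single i 1) (Pi.single s 1) := by
    rw [pd]
    have : (fun y => Dmat f y k s) = fun y => fderiv ℝ h y (Pi.single s 1) := rfl
    rw [this, key]
  rw [h1, h2]
  exact hsymm (Pi.single s 1) (Pi.single i 1)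

/-- differentiating the holomorphy relation. -/
lemma dagger_rel (hU : IsOpen U) (hV : IsOpen V)
    (hf : ContDiffOn ℝ (⊤ : ℕ∞) f U) (hfU : Set.MapsTo f U V)
    {J₁ J₂ : (Fin n → ℝ) → Matrix (Fin n) (Fin n) ℝ}
    (hJ₁smooth : ∀ k j : Fin n, ContDiffOn ℝ (⊤ : ℕ∞) (fun x => J₁ x k j) U)
    (hJ₂smooth : ∀ k j : Fin n, ContDiffOn ℝ (⊤ : ℕ∞) (fun x => J₂ x k j) V)
    (hol : ∀ y ∈ U, Dmat f y * J₁ y = J₂ (f y) * Dmat f y)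
    {x : Fin n → ℝ} (hx : x ∈ U) (s k j : Fin n) :
    ∑ m, (Dmat f x k m * pd (fun y => J₁ y m j) s x
        + J₁ x m j * pd (fun y => Dmat f y k m) s x)
    = ∑ m, (J₂ (f x) k m * pd (fun y => Dmat f y m j) s x
        + Dmat f x m j * pd (fun y => J₂ (f y) k m) s x) := by
  have hJ₂c : ∀ k m : Fin n, ContDiffOn ℝ (⊤ : ℕ∞) (fun y => J₂ (f y) k m) U := by
    intro k m
    have := (hJ₂smooth k m).comp hf hfU
    exact this
  have heq : (fun y => ∑ m, Dmat f y k m * J₁ y m j)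
      =ᶠ[nhds x] (fun y => ∑ m, J₂ (f y) k m * Dmat f y m j) := by
    refine Filter.eventuallyEq_of_mem (hU.mem_nhds hx) (fun y hy => ?_)
    calc ∑ m, Dmat f y k m * J₁ y m j = (Dmat f y * J₁ y) k j := (Matrix.mul_apply).symm
      _ = (J₂ (f y) * Dmat f y) k j := by rw [hol y hy]
      _ = ∑ m, J₂ (f y) k m * Dmat f y m j := Matrix.mul_apply
  have h0 : pd (fun y => ∑ m, Dmat f y k m * J₁ y m j) s x
      = pd (fun y => ∑ m, J₂ (f y) k m * Dmat f y m j) s x := by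
    rw [pd, pd, heq.fderiv_eq (𝕜 := ℝ)]
  rw [pd_sum_mul (fun m => diffAt hU hx (contDiffOn_Dmat hU hf k m))
      (fun m => diffAt hU hx (hJ₁smooth m j)) s,
    pd_sum_mul (fun m => diffAt hU hx (hJ₂c k m))
      (fun m => diffAt hU hx (contDiffOn_Dmat hU hf m j)) s] at h0
  exact h0

end Diffeo

variable {n : ℕ}

section ALG
variable (D E J1 J2 : Matrix (Fin n) (Fin n) ℝ)
  (G1 G2 H dE dJ1 dJ2c pdJ2 : Fin n → Fin n → Fin n → ℝ)

/-- Matrix form of the `Q1` array (at fixed `jj`): entry `(a,i)`. -/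
def Q1mat (jj : Fin n) : Matrix (Fin n) (Fin n) ℝ :=
  Matrix.of fun a i =>
    (∑ m, J1 m jj * dE m a i)
    + (∑ m, E m i * ((∑ l, G1 a l m * J1 l jj) - ∑ l, G1 a jj l * J1 l m))
    - (∑ m, (∑ k, E a k * ((∑ l, G2 k l i * J2 l m) - ∑ l, G2 k m l * J2 l i)) * D m jj)
    - (∑ m, J2 m i * dE jj a m)

def dEmat (s : Fin n) : Matrix (Fin n) (Fin n) ℝ := Matrix.of fun a i => dE s a i
def Hmat (s : Fin n) : Matrix (Fin n) (Fin n) ℝ := Matrix.of fun k i => H k s i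
def Wmat (jj : Fin n) : Matrix (Fin n) (Fin n) ℝ :=
  Matrix.of fun a m => (∑ l, G1 a l m * J1 l jj) - ∑ l, G1 a jj l * J1 l m
def Ymat (jj : Fin n) : Matrix (Fin n) (Fin n) ℝ :=
  Matrix.of fun k i => ∑ m, ((∑ l, G2 k l i * J2 l m) - ∑ l, G2 k m l * J2 l i) * D m jj

lemma Q1mat_decomp (jj : Fin n) :
    Q1mat D E J1 J2 G1 G2 dE jj
      = (∑ m, J1 m jj • dEmat dE m) + Wmat J1 G1 jj * E
        - E * Ymat D J2 G2 jj - dEmat dE jj * J2 := by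
  ext a i
  simp only [Q1mat, Matrix.of_apply, Matrix.sub_apply, Matrix.add_apply,
    Matrix.mul_apply, Matrix.sum_apply, Matrix.smul_apply, smul_eq_mul,
    dEmat, Wmat, Ymat]
  congr 1
  · congr 1
    · congr 1
      exact Finset.sum_congr rfl fun m _ => by ring
    · -- T3 reorder : ∑ m (∑ k E a k * Z k i m) * D m jj = ∑ k E a k * ∑ m Z k i m * D m jj
      calc ∑ m, (∑ k, E a k * ((∑ l, G2 k l i * J2 l m) - ∑ l, G2 k m l * J2 l i)) * D m jj
          = ∑ m, ∑ k, E a k * (((∑ l, G2 k l i * J2 l m) - ∑ l, G2 k m l * J2 l i) * D m jj) := by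
            refine Finset.sum_congr rfl fun m _ => ?_
            rw [Finset.sum_mul]
            exact Finset.sum_congr rfl fun k _ => by ring
        _ = ∑ k, ∑ m, E a k * (((∑ l, G2 k l i * J2 l m) - ∑ l, G2 k m l * J2 l i) * D m jj) :=
            Finset.sum_comm
        _ = ∑ k, E a k * ∑ m, ((∑ l, G2 k l i * J2 l m) - ∑ l, G2 k m l * J2 l i) * D m jj := by
            exact Finset.sum_congr rfl fun k _ => (Finset.mul_sum _ _ _).symm
  · exact Finset.sum_congr rfl fun m _ => by ring

lemma DQ1D (h1 : E * D = 1) (h2 : D * E = 1) (h3 : D * J1 = J2 * D)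
    (hdEm : ∀ s, dEmat dE s * D = -(E * Hmat H s)) (jj : Fin n) :
    D * Q1mat D E J1 J2 G1 G2 dE jj * D
      = (∑ m, J1 m jj • (-(Hmat H m))) + D * Wmat J1 G1 jj
        - Ymat D J2 G2 jj * D + Hmat H jj * J1 := by
  rw [Q1mat_decomp]
  have expand : D * ((∑ m, J1 m jj • dEmat dE m) + Wmat J1 G1 jj * E
        - E * Ymat D J2 G2 jj - dEmat dE jj * J2) * D
      = D * (∑ m, J1 m jj • dEmat dE m) * D + D * (Wmat J1 G1 jj * E) * D
        - D * (E * Ymat D J2 G2 jj) * D - D * (dEmat dE jj * J2) * D := by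
    noncomm_ring
  rw [expand]
  have p1 : D * (∑ m, J1 m jj • dEmat dE m) * D = ∑ m, J1 m jj • (-(Hmat H m)) := by
    rw [Matrix.mul_sum, Matrix.sum_mul]
    refine Finset.sum_congr rfl fun m _ => ?_
    rw [Matrix.mul_smul, Matrix.smul_mul]
    congr 1
    rw [Matrix.mul_assoc, hdEm m, Matrix.mul_neg, ← Matrix.mul_assoc, h2, Matrix.one_mul]
  have p2 : D * (Wmat J1 G1 jj * E) * D = D * Wmat J1 G1 jj := by
    rw [Matrix.mul_assoc D (Wmat J1 G1 jj * E) D, Matrix.mul_assoc (Wmat J1 G1 jj) E D,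
      h1, Matrix.mul_one]
  have p3 : D * (E * Ymat D J2 G2 jj) * D = Ymat D J2 G2 jj * D := by
    rw [← Matrix.mul_assoc D E (Ymat D J2 G2 jj), h2, Matrix.one_mul]
  have p4 : D * (dEmat dE jj * J2) * D = -(Hmat H jj * J1) := by
    rw [Matrix.mul_assoc D (dEmat dE jj * J2) D, Matrix.mul_assoc (dEmat dE jj) J2 D,
      ← h3, ← Matrix.mul_assoc (dEmat dE jj) D J1, hdEm jj, Matrix.neg_mul,
      Matrix.mul_neg, ← Matrix.mul_assoc D (E * Hmat H jj) J1,
      ← Matrix.mul_assoc D E (Hmat H jj), h2, Matrix.one_mul]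
  rw [p1, p2, p3, p4]
  abel

lemma ALG (h1 : E * D = 1) (h2 : D * E = 1) (h3 : D * J1 = J2 * D)
    (hdE : ∀ s a i, ∑ m, (E a m * H m s i + D m i * dE s a m) = 0)
    (hsym : ∀ k s i, H k s i = H k i s)
    (hdag : ∀ s k j, ∑ m, (D k m * dJ1 s m j + J1 m j * H k s m)
      = ∑ m, (J2 k m * H m s j + D m j * dJ2c s k m))
    (hch : ∀ s k m, dJ2c s k m = ∑ r, pdJ2 r k m * D r s)
    (c jj ss : Fin n) :
    ∑ i, (∑ a, D c a * Q1mat D E J1 J2 G1 G2 dE jj a i) * D i ss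
      = (∑ m, D c m * (-dJ1 jj m ss + dJ1 ss m jj
            + ((∑ l, J1 l jj * G1 m l ss) - ∑ l, J1 l ss * G1 m jj l)))
        - ∑ m, ∑ l, (-pdJ2 m c l + pdJ2 l c m
            + ((∑ r, J2 r m * G2 c r l) - ∑ r, J2 r l * G2 c m r)) * D m jj * D l ss := by
  have hdEm : ∀ s, dEmat dE s * D = -(E * Hmat H s) := by
    intro s
    ext a i
    have h0 := hdE s a i
    rw [Finset.sum_add_distrib] at h0
    simp only [Matrix.mul_apply, Matrix.neg_apply, dEmat, Hmat, Matrix.of_apply]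
    have : ∑ m, dE s a m * D m i = ∑ m, D m i * dE s a m :=
      Finset.sum_congr rfl fun m _ => mul_comm _ _
    rw [this]
    linarith
  have hL : ∑ i, (∑ a, D c a * Q1mat D E J1 J2 G1 G2 dE jj a i) * D i ss
      = (D * Q1mat D E J1 J2 G1 G2 dE jj * D) c ss := by
    simp [Matrix.mul_apply, Finset.sum_mul]
  rw [hL, DQ1D D E J1 J2 G1 G2 H dE h1 h2 h3 hdEm jj]
  simp only [Matrix.add_apply, Matrix.sub_apply, Matrix.sum_apply, Matrix.smul_apply,
    Matrix.neg_apply, Matrix.mul_apply, Matrix.of_apply, Hmat, Wmat, Ymat, smul_eq_mul,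
    mul_neg, mul_add, mul_sub, neg_mul, add_mul, sub_mul,
    Finset.sum_add_distrib, Finset.sum_sub_distrib, Finset.sum_neg_distrib]
  -- component equalities
  have e1 : ∑ x, D c x * ∑ l, G1 x l ss * J1 l jj
      = ∑ x, D c x * ∑ l, J1 l jj * G1 x l ss := by
    refine Finset.sum_congr rfl fun x _ => ?_
    congr 1
    exact Finset.sum_congr rfl fun l _ => mul_comm _ _
  have e2 : ∑ x, D c x * ∑ l, G1 x jj l * J1 l ss
      = ∑ x, D c x * ∑ l, J1 l ss * G1 x jj l := by
    refine Finset.sum_congr rfl fun x _ => ?_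
    congr 1
    exact Finset.sum_congr rfl fun l _ => mul_comm _ _
  have e3 : ∑ x, (∑ x1, (∑ l, G2 c l x * J2 l x1) * D x1 jj) * D x ss
      = ∑ x, ∑ x1, (∑ r, J2 r x * G2 c r x1) * D x jj * D x1 ss := by
    calc ∑ x, (∑ x1, (∑ l, G2 c l x * J2 l x1) * D x1 jj) * D x ss
        = ∑ x, ∑ x1, (∑ l, G2 c l x * J2 l x1) * D x1 jj * D x ss := by
          exact Finset.sum_congr rfl fun x _ => Finset.sum_mul _ _ _
      _ = ∑ x1, ∑ x, (∑ l, G2 c l x * J2 l x1) * D x1 jj * D x ss := Finset.sum_comm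
      _ = ∑ x, ∑ x1, (∑ r, J2 r x * G2 c r x1) * D x jj * D x1 ss := by
          refine Finset.sum_congr rfl fun x _ => Finset.sum_congr rfl fun x1 _ => ?_
          have : (∑ l, G2 c l x1 * J2 l x) = ∑ r, J2 r x * G2 c r x1 :=
            Finset.sum_congr rfl fun l _ => mul_comm _ _
          rw [this]
  have e4 : ∑ x, (∑ x1, (∑ l, G2 c x1 l * J2 l x) * D x1 jj) * D x ss
      = ∑ x, ∑ x1, (∑ r, J2 r x1 * G2 c x r) * D x jj * D x1 ss := by
    calc ∑ x, (∑ x1, (∑ l, G2 c x1 l * J2 l x) * D x1 jj) * D x ss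
        = ∑ x, ∑ x1, (∑ l, G2 c x1 l * J2 l x) * D x1 jj * D x ss := by
          exact Finset.sum_congr rfl fun x _ => Finset.sum_mul _ _ _
      _ = ∑ x1, ∑ x, (∑ l, G2 c x1 l * J2 l x) * D x1 jj * D x ss := Finset.sum_comm
      _ = ∑ x, ∑ x1, (∑ r, J2 r x1 * G2 c x r) * D x jj * D x1 ss := by
          refine Finset.sum_congr rfl fun x _ => Finset.sum_congr rfl fun x1 _ => ?_
          have : (∑ l, G2 c x l * J2 l x1) = ∑ r, J2 r x1 * G2 c x r :=
            Finset.sum_congr rfl fun l _ => mul_comm _ _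
          rw [this]
  have e5 : ∑ x, ∑ x1, pdJ2 x c x1 * D x jj * D x1 ss
      = ∑ x, D c x * dJ1 jj x ss + ∑ x, J1 x ss * H c jj x - ∑ x, J2 c x * H x jj ss := by
    have step1 : ∑ x, ∑ x1, pdJ2 x c x1 * D x jj * D x1 ss
        = ∑ x1, D x1 ss * dJ2c jj c x1 := by
      calc ∑ x, ∑ x1, pdJ2 x c x1 * D x jj * D x1 ss
          = ∑ x1, ∑ x, pdJ2 x c x1 * D x jj * D x1 ss := Finset.sum_comm
        _ = ∑ x1, D x1 ss * dJ2c jj c x1 := by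
            refine Finset.sum_congr rfl fun x1 _ => ?_
            rw [hch jj c x1, Finset.mul_sum]
            exact Finset.sum_congr rfl fun r _ => by ring
    have step2 := hdag jj c ss
    rw [Finset.sum_add_distrib, Finset.sum_add_distrib] at step2
    rw [step1]
    linarith
  have e6 : ∑ x, ∑ x1, pdJ2 x1 c x * D x jj * D x1 ss
      = ∑ x, D c x * dJ1 ss x jj + ∑ x, J1 x jj * H c ss x - ∑ x, J2 c x * H x ss jj := by
    have step1 : ∑ x, ∑ x1, pdJ2 x1 c x * D x jj * D x1 ss
        = ∑ x, D x jj * dJ2c ss c x := by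
      refine Finset.sum_congr rfl fun x _ => ?_
      rw [hch ss c x, Finset.mul_sum]
      exact Finset.sum_congr rfl fun r _ => by ring
    have step2 := hdag ss c jj
    rw [Finset.sum_add_distrib, Finset.sum_add_distrib] at step2
    rw [step1]
    linarith
  have e7 : ∑ x, J1 x jj * H c x ss = ∑ x, J1 x jj * H c ss x :=
    Finset.sum_congr rfl fun x _ => by rw [hsym c x ss]
  have e8 : ∑ x, H c jj x * J1 x ss = ∑ x, J1 x ss * H c jj x :=
    Finset.sum_congr rfl fun x _ => mul_comm _ _
  have e9 : ∑ x, J2 c x * H x jj ss = ∑ x, J2 c x * H x ss jj :=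
    Finset.sum_congr rfl fun x _ => by rw [hsym x jj ss]
  linear_combination e1 - e2 - e3 + e4 - e5 + e6 - e7 + e8 + e9

end ALG

lemma sum3_perm (F : Fin n → Fin n → Fin n → ℝ) :
    ∑ a, ∑ b, ∑ c, F a b c = ∑ b, ∑ c, ∑ a, F a b c := by
  calc ∑ a, ∑ b, ∑ c, F a b c
      = ∑ b, ∑ a, ∑ c, F a b c := Finset.sum_comm
    _ = ∑ b, ∑ c, ∑ a, F a b c := Finset.sum_congr rfl fun b _ => Finset.sum_comm

lemma sum3_swap23 (F : Fin n → Fin n → Fin n → ℝ) :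
    ∑ a, ∑ b, ∑ c, F a b c = ∑ a, ∑ c, ∑ b, F a b c :=
  Finset.sum_congr rfl fun a _ => Finset.sum_comm

lemma sum4_perm (F : Fin n → Fin n → Fin n → Fin n → ℝ) :
    ∑ a, ∑ b, ∑ c, ∑ d, F a b c d = ∑ c, ∑ b, ∑ a, ∑ d, F a b c d := by
  calc ∑ a, ∑ b, ∑ c, ∑ d, F a b c d
      = ∑ b, ∑ a, ∑ c, ∑ d, F a b c d := Finset.sum_comm
    _ = ∑ b, ∑ c, ∑ a, ∑ d, F a b c d :=
        Finset.sum_congr rfl fun b _ => Finset.sum_comm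
    _ = ∑ c, ∑ b, ∑ a, ∑ d, F a b c d := Finset.sum_comm

lemma sum5_perm (F : Fin n → Fin n → Fin n → Fin n → Fin n → ℝ) :
    ∑ a, ∑ b, ∑ c, ∑ d, ∑ e, F a b c d e
      = ∑ e, ∑ b, ∑ a, ∑ c, ∑ d, F a b c d e := by
  calc ∑ a, ∑ b, ∑ c, ∑ d, ∑ e, F a b c d e
      = ∑ a, ∑ b, ∑ c, ∑ e, ∑ d, F a b c d e :=
        Finset.sum_congr rfl fun a _ => Finset.sum_congr rfl fun b _ =>
          Finset.sum_congr rfl fun c _ => Finset.sum_comm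
    _ = ∑ a, ∑ b, ∑ e, ∑ c, ∑ d, F a b c d e :=
        Finset.sum_congr rfl fun a _ => Finset.sum_congr rfl fun b _ => Finset.sum_comm
    _ = ∑ a, ∑ e, ∑ b, ∑ c, ∑ d, F a b c d e :=
        Finset.sum_congr rfl fun a _ => Finset.sum_comm
    _ = ∑ e, ∑ a, ∑ b, ∑ c, ∑ d, F a b c d e := Finset.sum_comm
    _ = ∑ e, ∑ b, ∑ a, ∑ c, ∑ d, F a b c d e :=
        Finset.sum_congr rfl fun e _ => Finset.sum_comm



lemma bilin_expand (D E J1 J2 : Matrix (Fin n) (Fin n) ℝ)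
    (G1 G2 dE : Fin n → Fin n → Fin n → ℝ) (p X P : Fin n → ℝ) (i : Fin n) :
    (∑ a, (∑ s, dE s a i * ∑ t, J1 s t * X t) * p a
      + ∑ a, E a i *
          ((∑ t, (∑ k, p k * ((∑ l, G1 k l a * J1 l t) - ∑ l, G1 k t l * J1 l a)) * X t)
            + ∑ t, J1 t a * P t))
    = (∑ m, (∑ k, (∑ b, E b k * p b) * ((∑ l, G2 k l i * J2 l m) - ∑ l, G2 k m l * J2 l i))
          * ∑ t, D m t * X t
        + ∑ m, J2 m i * ((∑ a, (∑ s, dE s a m * X s) * p a) + ∑ a, E a m * P a))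
      + ((∑ a, ∑ t, p a * X t * Q1mat D E J1 J2 G1 G2 dE t a i)
        + ∑ t, P t * ((∑ a, J1 t a * E a i) - ∑ m, E t m * J2 m i)) := by
  simp only [Q1mat, Matrix.of_apply, mul_add, add_mul, mul_sub, sub_mul, mul_neg, neg_mul,
    Finset.sum_mul, Finset.mul_sum, Finset.sum_add_distrib, Finset.sum_sub_distrib,
    Finset.sum_neg_distrib]
  have b1 : ∑ a, ∑ s, ∑ t, dE s a i * (J1 s t * X t) * p a
      = ∑ a, ∑ t, ∑ s, p a * X t * (J1 s t * dE s a i) := by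
    rw [sum3_swap23 (F := fun a s t => dE s a i * (J1 s t * X t) * p a)]
    exact Finset.sum_congr rfl fun a _ => Finset.sum_congr rfl fun t _ =>
      Finset.sum_congr rfl fun s _ => by ring
  have b2 : ∑ m, ∑ t, ∑ a, ∑ l, E m i * (p a * (G1 a l m * J1 l t) * X t)
      = ∑ a, ∑ t, ∑ m, ∑ l, p a * X t * (E m i * (G1 a l m * J1 l t)) := by
    rw [sum4_perm (F := fun m t a l => E m i * (p a * (G1 a l m * J1 l t) * X t))]
    exact Finset.sum_congr rfl fun a _ => Finset.sum_congr rfl fun t _ =>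
      Finset.sum_congr rfl fun m _ => Finset.sum_congr rfl fun l _ => by ring
  have b3 : ∑ m, ∑ t, ∑ a, ∑ l, E m i * (p a * (G1 a t l * J1 l m) * X t)
      = ∑ a, ∑ t, ∑ m, ∑ l, p a * X t * (E m i * (G1 a t l * J1 l m)) := by
    rw [sum4_perm (F := fun m t a l => E m i * (p a * (G1 a t l * J1 l m) * X t))]
    exact Finset.sum_congr rfl fun a _ => Finset.sum_congr rfl fun t _ =>
      Finset.sum_congr rfl fun m _ => Finset.sum_congr rfl fun l _ => by ring
  have b4 : ∑ m, ∑ t, E m i * (J1 t m * P t) = ∑ t, ∑ m, P t * (J1 t m * E m i) := by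
    rw [Finset.sum_comm]
    exact Finset.sum_congr rfl fun t _ => Finset.sum_congr rfl fun m _ => by ring
  have b5 : ∑ m, ∑ t, ∑ k, ∑ l, ∑ b, E b k * p b * (G2 k l i * J2 l m) * (D m t * X t)
      = ∑ b, ∑ t, ∑ m, ∑ k, ∑ l, p b * X t * (E b k * (G2 k l i * J2 l m) * D m t) := by
    rw [sum5_perm (F := fun m t k l b => E b k * p b * (G2 k l i * J2 l m) * (D m t * X t))]
    exact Finset.sum_congr rfl fun b _ => Finset.sum_congr rfl fun t _ =>
      Finset.sum_congr rfl fun m _ => Finset.sum_congr rfl fun k _ =>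
        Finset.sum_congr rfl fun l _ => by ring
  have b6 : ∑ m, ∑ t, ∑ k, ∑ l, ∑ b, E b k * p b * (G2 k m l * J2 l i) * (D m t * X t)
      = ∑ b, ∑ t, ∑ m, ∑ k, ∑ l, p b * X t * (E b k * (G2 k m l * J2 l i) * D m t) := by
    rw [sum5_perm (F := fun m t k l b => E b k * p b * (G2 k m l * J2 l i) * (D m t * X t))]
    exact Finset.sum_congr rfl fun b _ => Finset.sum_congr rfl fun t _ =>
      Finset.sum_congr rfl fun m _ => Finset.sum_congr rfl fun k _ =>
        Finset.sum_congr rfl fun l _ => by ring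
  have b7 : ∑ m, ∑ a, ∑ s, J2 m i * (dE s a m * X s * p a)
      = ∑ a, ∑ s, ∑ m, p a * X s * (J2 m i * dE s a m) := by
    rw [sum3_perm (F := fun m a s => J2 m i * (dE s a m * X s * p a))]
    exact Finset.sum_congr rfl fun a _ => Finset.sum_congr rfl fun s _ =>
      Finset.sum_congr rfl fun m _ => by ring
  have b8 : ∑ m, ∑ t, J2 m i * (E t m * P t) = ∑ t, ∑ m, P t * (E t m * J2 m i) := by
    rw [Finset.sum_comm]
    exact Finset.sum_congr rfl fun t _ => Finset.sum_congr rfl fun m _ => by ring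
  linear_combination b1 + b2 - b3 + b4 - b5 + b6 - b7 - b8

lemma sum_single_right (F : Fin n → ℝ) (j : Fin n) :
    ∑ t, F t * (Pi.single j (1:ℝ) : Fin n → ℝ) t = F j := by
  simp [Pi.single_apply, mul_ite, Finset.sum_ite_eq']

lemma double_single (C : Fin n → Fin n → ℝ) (a jj : Fin n) :
    ∑ b, ∑ t, (Pi.single a (1:ℝ) : Fin n → ℝ) b * (Pi.single jj (1:ℝ) : Fin n → ℝ) t * C b t = C a jj := by
  simp [Pi.single_apply, ite_mul, mul_ite, Finset.sum_ite_eq]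

lemma sandwich {D E M : Matrix (Fin n) (Fin n) ℝ} (h1 : E * D = 1) (h2 : D * E = 1)
    (h : D * M * D = 0) : M = 0 := by
  have : E * (D * M * D) * E = M := by
    calc E * (D * M * D) * E = ((E * D) * M) * (D * E) := by noncomm_ring
      _ = M := by rw [h1, h2, Matrix.one_mul, Matrix.mul_one]
  rw [← this, h, Matrix.mul_zero, Matrix.zero_mul]

lemma triple_apply (D M : Matrix (Fin n) (Fin n) ℝ) (c ss : Fin n) :
    (D * M * D) c ss = ∑ i, (∑ a, D c a * M a i) * D i ss := by
  simp [Matrix.mul_apply, Finset.sum_mul]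

lemma mulJE {D E J1 J2 : Matrix (Fin n) (Fin n) ℝ} (h1 : E * D = 1) (h2 : D * E = 1)
    (h3 : D * J1 = J2 * D) : J1 * E = E * J2 := by
  calc J1 * E = (E * D) * (J1 * E) := by rw [h1, Matrix.one_mul]
    _ = E * ((D * J1) * E) := by noncomm_ring
    _ = E * ((J2 * D) * E) := by rw [h3]
    _ = E * J2 := by rw [Matrix.mul_assoc J2 D E, h2, Matrix.mul_one]



lemma second_comp_full (D E J1 J2 : Matrix (Fin n) (Fin n) ℝ)
    (G1 G2 dE : Fin n → Fin n → Fin n → ℝ) (p X P : Fin n → ℝ) (i : Fin n)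
    (hQ : ∀ jj, Q1mat D E J1 J2 G1 G2 dE jj = 0) (hJE : J1 * E = E * J2) :
    (∑ a, (∑ s, dE s a i * ∑ t, J1 s t * X t) * p a
      + ∑ a, E a i *
          ((∑ t, (∑ k, p k * ((∑ l, G1 k l a * J1 l t) - ∑ l, G1 k t l * J1 l a)) * X t)
            + ∑ t, J1 t a * P t))
    = ∑ m, (∑ k, (∑ b, E b k * p b) * ((∑ l, G2 k l i * J2 l m) - ∑ l, G2 k m l * J2 l i))
          * ∑ t, D m t * X t
        + ∑ m, J2 m i * ((∑ a, (∑ s, dE s a m * X s) * p a) + ∑ a, E a m * P a) := by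
  rw [bilin_expand D E J1 J2 G1 G2 dE p X P i]
  have hz1 : ∑ a, ∑ t, p a * X t * Q1mat D E J1 J2 G1 G2 dE t a i = 0 :=
    Finset.sum_eq_zero fun a _ => Finset.sum_eq_zero fun t _ => by rw [hQ t]; simp
  have hz2 : ∑ t, P t * ((∑ a, J1 t a * E a i) - ∑ m, E t m * J2 m i) = 0 := by
    refine Finset.sum_eq_zero fun t _ => ?_
    have he : (∑ a, J1 t a * E a i) = ∑ m, E t m * J2 m i := by
      calc ∑ a, J1 t a * E a i = (J1 * E) t i := (Matrix.mul_apply).symm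
        _ = (E * J2) t i := by rw [hJE]
        _ = ∑ m, E t m * J2 m i := Matrix.mul_apply
    rw [he]
    ring
  rw [hz1, hz2]
  ring

lemma second_comp_extract (D E J1 J2 : Matrix (Fin n) (Fin n) ℝ)
    (G1 G2 dE : Fin n → Fin n → Fin n → ℝ) (a jj i : Fin n)
    (h : (∑ b, (∑ s, dE s b i * ∑ t, J1 s t * (Pi.single jj (1:ℝ) : Fin n → ℝ) t)
            * (Pi.single a (1:ℝ) : Fin n → ℝ) b
      + ∑ b, E b i *
          ((∑ t, (∑ k, (Pi.single a (1:ℝ) : Fin n → ℝ) k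
              * ((∑ l, G1 k l b * J1 l t) - ∑ l, G1 k t l * J1 l b))
            * (Pi.single jj (1:ℝ) : Fin n → ℝ) t)
            + ∑ t, J1 t b * (0 : Fin n → ℝ) t))
    = ∑ m, (∑ k, (∑ b, E b k * (Pi.single a (1:ℝ) : Fin n → ℝ) b)
          * ((∑ l, G2 k l i * J2 l m) - ∑ l, G2 k m l * J2 l i))
          * ∑ t, D m t * (Pi.single jj (1:ℝ) : Fin n → ℝ) t
        + ∑ m, J2 m i * ((∑ b, (∑ s, dE s b m * (Pi.single jj (1:ℝ) : Fin n → ℝ) s)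
            * (Pi.single a (1:ℝ) : Fin n → ℝ) b) + ∑ b, E b m * (0 : Fin n → ℝ) b)) :
    Q1mat D E J1 J2 G1 G2 dE jj a i = 0 := by
  rw [bilin_expand D E J1 J2 G1 G2 dE (Pi.single a 1) (Pi.single jj 1) 0 i] at h
  have h0 : (∑ b, ∑ t, (Pi.single a (1:ℝ) : Fin n → ℝ) b * (Pi.single jj (1:ℝ) : Fin n → ℝ) t
        * Q1mat D E J1 J2 G1 G2 dE t b i)
      + ∑ t, (0 : Fin n → ℝ) t * ((∑ b, J1 t b * E b i) - ∑ m, E t m * J2 m i) = 0 := by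
    linarith
  rw [double_single (fun b t => Q1mat D E J1 J2 G1 G2 dE t b i) a jj] at h0
  simpa using h0


lemma Stens_simp (J : (Fin n → ℝ) → Matrix (Fin n) (Fin n) ℝ)
    (Γ : (Fin n → ℝ) → Fin n → Fin n → Fin n → ℝ) (x : Fin n → ℝ) (k i j : Fin n) :
    Stens J Γ x k i j
      = -pd (fun y => J y k j) i x + pd (fun y => J y k i) j x
        + ((∑ l, J x l i * Γ x k l j) - ∑ l, J x l j * Γ x k i l) := by
  simp only [Stens, nablaJ, torsion, mul_sub, Finset.sum_sub_distrib]
  ring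

end Aux

/-- the cotangent lift `f̃` of a smooth diffeomorphism
`f : (U,J₁,∇₁) → (V,J₂,∇₂)` is `(J₁^{G,∇₁}, J₂^{G,∇₂})`-holomorphic iff `f` is
`(J₁,J₂)`-holomorphic and `f_*S₁ = S₂`. -/
theorem statement12 (n : ℕ) (U V : Set (Fin n → ℝ)) (hU : IsOpen U) (hV : IsOpen V)
    (f g : (Fin n → ℝ) → (Fin n → ℝ))
    (hf : ContDiffOn ℝ (⊤ : ℕ∞) f U) (hg : ContDiffOn ℝ (⊤ : ℕ∞) g V)
    (hfU : Set.MapsTo f U V) (hgV : Set.MapsTo g V U)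
    (hgf : ∀ x ∈ U, g (f x) = x) (hfg : ∀ y ∈ V, f (g y) = y)
    (J₁ J₂ : (Fin n → ℝ) → Matrix (Fin n) (Fin n) ℝ)
    (Γ₁ Γ₂ : (Fin n → ℝ) → Fin n → Fin n → Fin n → ℝ)
    (hJ₁smooth : ∀ k j : Fin n, ContDiffOn ℝ (⊤ : ℕ∞) (fun x => J₁ x k j) U)
    (hJ₂smooth : ∀ k j : Fin n, ContDiffOn ℝ (⊤ : ℕ∞) (fun x => J₂ x k j) V)
    (hΓ₁smooth : ∀ k i j : Fin n, ContDiffOn ℝ (⊤ : ℕ∞) (fun x => Γ₁ x k i j) U)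
    (hΓ₂smooth : ∀ k i j : Fin n, ContDiffOn ℝ (⊤ : ℕ∞) (fun x => Γ₂ x k i j) V)
    (hJ₁ : ∀ x ∈ U, J₁ x * J₁ x = -1) (hJ₂ : ∀ y ∈ V, J₂ y * J₂ y = -1) :
    -- `f̃` is `(J₁^{G,∇₁}, J₂^{G,∇₂})`-holomorphic
    (∀ x ∈ U, ∀ (p : Fin n → ℝ) (v : (Fin n → ℝ) × (Fin n → ℝ)),
        fderiv ℝ (cotLift f) (x, p) (JGmap J₁ Γ₁ x p v) =
          JGmap J₂ Γ₂ (f x) (((Dmat f x)⁻¹)ᵀ.mulVec p)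
            (fderiv ℝ (cotLift f) (x, p) v)) ↔
      -- `f` is `(J₁,J₂)`-holomorphic …
      ((∀ x ∈ U, Dmat f x * J₁ x = J₂ (f x) * Dmat f x) ∧
        -- … and `f_*S₁ = S₂`
        (∀ x ∈ U, ∀ k i j : Fin n,
          ∑ m, Dmat f x k m * Stens J₁ Γ₁ x m i j =
            ∑ m, ∑ l, Stens J₂ Γ₂ (f x) k m l * Dmat f x m i * Dmat f x l j)) := by
  -- inverse-transpose rewriting
  have hq : ∀ x ∈ U, ∀ p : Fin n → ℝ,
      ((Dmat f x)⁻¹)ᵀ.mulVec p = fun k => ∑ b, Dmat g (f x) b k * p b := by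
    intro x hx p
    rw [Aux.inv_Dmat hU hV hf hg hfU hgf hx]
    funext k
    simp [Matrix.mulVec, dotProduct, Matrix.transpose_apply]
  -- the pointwise characterisation of holomorphy of the lift
  have key : ∀ x (hx : x ∈ U),
      ((∀ (p : Fin n → ℝ) (v : (Fin n → ℝ) × (Fin n → ℝ)),
          fderiv ℝ (cotLift f) (x, p) (JGmap J₁ Γ₁ x p v) =
            JGmap J₂ Γ₂ (f x) (((Dmat f x)⁻¹)ᵀ.mulVec p)
              (fderiv ℝ (cotLift f) (x, p) v))
        ↔ (Dmat f x * J₁ x = J₂ (f x) * Dmat f x ∧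
            ∀ jj, Aux.Q1mat (Dmat f x) (Dmat g (f x)) (J₁ x) (J₂ (f x)) (Γ₁ x) (Γ₂ (f x))
              (fun s a i => pd (fun y => Dmat g (f y) a i) s x) jj = 0)) := by
    intro x hx
    constructor
    · intro H
      have hfirst : Dmat f x * J₁ x = J₂ (f x) * Dmat f x := by
        ext k j
        have h := H 0 (Pi.single j 1, 0)
        rw [Aux.fderiv_cotLift hU hV hf hg hfU hgf hx,
          Aux.fderiv_cotLift hU hV hf hg hfU hgf hx] at h
        have h1 : ∑ m, Dmat f x k m * (∑ t, J₁ x m t * (Pi.single j (1:ℝ) : Fin n → ℝ) t)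
            = ∑ m, J₂ (f x) k m * (∑ t, Dmat f x m t * (Pi.single j (1:ℝ) : Fin n → ℝ) t) :=
          congrFun (congrArg Prod.fst h) k
        simp only [Aux.sum_single_right] at h1
        rw [Matrix.mul_apply, Matrix.mul_apply]
        exact h1
      refine ⟨hfirst, fun jj => ?_⟩
      ext a i
      have h := H (Pi.single a 1) (Pi.single jj 1, 0)
      rw [Aux.fderiv_cotLift hU hV hf hg hfU hgf hx,
        Aux.fderiv_cotLift hU hV hf hg hfU hgf hx, hq x hx] at h
      have h2 := congrFun (congrArg Prod.snd h) i
      have := Aux.second_comp_extract (Dmat f x) (Dmat g (f x)) (J₁ x) (J₂ (f x))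
        (Γ₁ x) (Γ₂ (f x)) (fun s a i => pd (fun y => Dmat g (f y) a i) s x) a jj i h2
      simpa using this
    · rintro ⟨hC1, hQ⟩ p v
      rw [Aux.fderiv_cotLift hU hV hf hg hfU hgf hx,
        Aux.fderiv_cotLift hU hV hf hg hfU hgf hx, hq x hx]
      have h1 : Dmat g (f x) * Dmat f x = 1 :=
        Aux.DgDf_one hU hV hf hg hfU hgf hx
      have h2 : Dmat f x * Dmat g (f x) = 1 :=
        Aux.DfDg_one hU hV hf hg hfU hgV hgf hfg hx
      refine Prod.ext ?_ ?_
      · show (Dmat f x).mulVec ((J₁ x).mulVec v.1)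
            = (J₂ (f x)).mulVec ((Dmat f x).mulVec v.1)
        rw [Matrix.mulVec_mulVec, Matrix.mulVec_mulVec, hC1]
      · funext i
        exact Aux.second_comp_full (Dmat f x) (Dmat g (f x)) (J₁ x) (J₂ (f x))
          (Γ₁ x) (Γ₂ (f x)) (fun s a i => pd (fun y => Dmat g (f y) a i) s x)
          p v.1 v.2 i hQ (Aux.mulJE h1 h2 hC1)
  -- equivalence of the vanishing of Q1 and the push-forward condition on S
  have hSequiv : ∀ (hol : ∀ x ∈ U, Dmat f x * J₁ x = J₂ (f x) * Dmat f x),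
      ∀ x (hx : x ∈ U),
      ((∀ jj, Aux.Q1mat (Dmat f x) (Dmat g (f x)) (J₁ x) (J₂ (f x)) (Γ₁ x) (Γ₂ (f x))
          (fun s a i => pd (fun y => Dmat g (f y) a i) s x) jj = 0)
        ↔ (∀ k i j : Fin n,
          ∑ m, Dmat f x k m * Stens J₁ Γ₁ x m i j =
            ∑ m, ∑ l, Stens J₂ Γ₂ (f x) k m l * Dmat f x m i * Dmat f x l j)) := by
    intro hol x hx
    have h1 : Dmat g (f x) * Dmat f x = 1 := Aux.DgDf_one hU hV hf hg hfU hgf hx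
    have h2 : Dmat f x * Dmat g (f x) = 1 := Aux.DfDg_one hU hV hf hg hfU hgV hgf hfg hx
    have halg : ∀ c jj ss : Fin n,
        ∑ i, (∑ a, Dmat f x c a * Aux.Q1mat (Dmat f x) (Dmat g (f x)) (J₁ x) (J₂ (f x))
            (Γ₁ x) (Γ₂ (f x)) (fun s a i => pd (fun y => Dmat g (f y) a i) s x) jj a i)
          * Dmat f x i ss
        = ∑ m, Dmat f x c m * Stens J₁ Γ₁ x m jj ss
          - ∑ m, ∑ l, Stens J₂ Γ₂ (f x) c m l * Dmat f x m jj * Dmat f x l ss := by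
      intro c jj ss
      have halg0 := Aux.ALG (Dmat f x) (Dmat g (f x)) (J₁ x) (J₂ (f x)) (Γ₁ x) (Γ₂ (f x))
        (fun k s i => pd (fun y => Dmat f y k i) s x)
        (fun s a i => pd (fun y => Dmat g (f y) a i) s x)
        (fun s m j => pd (fun y => J₁ y m j) s x)
        (fun s k m => pd (fun y => J₂ (f y) k m) s x)
        (fun r k m => pd (fun y => J₂ y k m) r (f x))
        h1 h2 (hol x hx)
        (fun s a i => Aux.dE_rel hU hV hf hg hfU hgf hx s a i)
        (fun k s i => Aux.H_symm hU hf hx k s i)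
        (fun s k j => Aux.dagger_rel hU hV hf hfU hJ₁smooth hJ₂smooth hol hx s k j)
        (fun s k m => Aux.pd_comp (Aux.diffAt hV (hfU hx) (hJ₂smooth k m))
          (Aux.diffAt_vec hU hx hf) s)
        c jj ss
      rw [halg0]
      simp only [Aux.Stens_simp]
    constructor
    · intro hQ k i j
      have h0 := halg k i j
      have hzero : ∑ i', (∑ a, Dmat f x k a * Aux.Q1mat (Dmat f x) (Dmat g (f x)) (J₁ x)
          (J₂ (f x)) (Γ₁ x) (Γ₂ (f x))
            (fun s a i => pd (fun y => Dmat g (f y) a i) s x) i a i') * Dmat f x i' j = 0 := by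
        rw [hQ i]
        simp
      rw [hzero] at h0
      linarith [h0]
    · intro hS jj
      refine Aux.sandwich h1 h2 ?_
      ext c ss
      rw [Aux.triple_apply, halg c jj ss, hS c jj ss]
      simp
  constructor
  · intro Hol
    have hol : ∀ x ∈ U, Dmat f x * J₁ x = J₂ (f x) * Dmat f x :=
      fun x hx => ((key x hx).1 (Hol x hx)).1
    refine ⟨hol, fun x hx k i j => ?_⟩
    exact (hSequiv hol x hx).1 ((key x hx).1 (Hol x hx)).2 k i j
  · rintro ⟨hol, hS⟩ x hx p v
    exact (key x hx).2 ⟨hol x hx, (hSequiv hol x hx).2 (hS x hx)⟩ p v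
end
end

section
/- Let J₁, J₂ be almost complex structures on open subsets U, V of ℝ^n respectively and let f : U → V be a smooth diffeomorphism. Then the cotangent lift f̃ is (J̃₁, J̃₂)-holomorphic (with respect to the Satô lifts) if and only if f is (J₁,J₂)-holomorphic. -/
open Matrix BigOperators

noncomputable section

/-- The Satô (complete) lift `J̃(x,p)`, acting on tangent vectors `(X,P)` of
`T*ℝ^n = ℝ^n × ℝ^n` by `(X,P) ↦ (J X, B X + ᵗJ P)`. -/
def SatoMap {n : ℕ} (J : (Fin n → ℝ) → Matrix (Fin n) (Fin n) ℝ) (x p : Fin n → ℝ) :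
    (Fin n → ℝ) × (Fin n → ℝ) → (Fin n → ℝ) × (Fin n → ℝ) :=
  fun v => ((J x).mulVec v.1, (Bblock J x p).mulVec v.1 + (J x)ᵀ.mulVec v.2)


section SatoAux
variable {n : ℕ}

lemma fderiv_apply_eq_sum_pd (φ : (Fin n → ℝ) → ℝ) (x v : Fin n → ℝ) :
    fderiv ℝ φ x v = ∑ i, v i * pd φ i x := by
  have hv : v = ∑ i, v i • (Pi.single i (1:ℝ) : Fin n → ℝ) := by
    funext j
    simp [Finset.sum_apply, Pi.single_apply]
  conv_lhs => rw [hv]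
  rw [map_sum]
  simp [pd]

lemma fderiv_eq_mulVec {f : (Fin n → ℝ) → (Fin n → ℝ)} {x : Fin n → ℝ}
    (hf : DifferentiableAt ℝ f x) (v : Fin n → ℝ) :
    fderiv ℝ f x v = (Dmat f x).mulVec v := by
  funext k
  have hk : (fun y => f y k) = ⇑(ContinuousLinearMap.proj (R := ℝ) (φ := fun _ : Fin n => ℝ) k) ∘ f := rfl
  have h := ((ContinuousLinearMap.proj (R := ℝ) (φ := fun _ : Fin n => ℝ) k).hasFDerivAt.comp x
    hf.hasFDerivAt).fderiv
  have : fderiv ℝ f x v k = fderiv ℝ (fun y => f y k) x v := by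
    rw [hk, h]; rfl
  rw [this, fderiv_apply_eq_sum_pd]
  simp [Matrix.mulVec, dotProduct, Dmat, mul_comm]

/-- chain rule for a scalar function composed with f -/
lemma pd_comp {h : (Fin n → ℝ) → ℝ} {f : (Fin n → ℝ) → (Fin n → ℝ)} {x : Fin n → ℝ}
    (hh : DifferentiableAt ℝ h (f x)) (hf : DifferentiableAt ℝ f x) (j : Fin n) :
    pd (fun y => h (f y)) j x = ∑ q, pd h q (f x) * Dmat f x q j := by
  have hc : fderiv ℝ (h ∘ f) x = (fderiv ℝ h (f x)).comp (fderiv ℝ f x) := fderiv_comp x hh hf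
  have : pd (fun y => h (f y)) j x = fderiv ℝ h (f x) (fderiv ℝ f x (Pi.single j 1)) := by
    rw [pd, show (fun y => h (f y)) = h ∘ f from rfl, hc]; rfl
  rw [this, fderiv_apply_eq_sum_pd]
  refine Finset.sum_congr rfl fun q _ => ?_
  rw [mul_comm]
  congr 1
  have := fderiv_eq_mulVec hf (Pi.single j 1)
  rw [this]
  simp [Matrix.mulVec_single]

lemma Dmat_entry_contDiffOn {f : (Fin n → ℝ) → (Fin n → ℝ)} {U : Set (Fin n → ℝ)}
    (hU : IsOpen U) (hf : ContDiffOn ℝ (⊤ : ℕ∞) f U) (a b : Fin n) :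
    ContDiffOn ℝ (⊤ : ℕ∞) (fun y => Dmat f y a b) U := by
  have hfa : ContDiffOn ℝ (⊤ : ℕ∞) (fun y => f y a) U := by
    exact (ContinuousLinearMap.proj (R := ℝ) (φ := fun _ : Fin n => ℝ) a).contDiff.comp_contDiffOn hf
  have hd : ContDiffOn ℝ (⊤ : ℕ∞) (fderiv ℝ (fun y => f y a)) U :=
    hfa.fderiv_of_isOpen hU (by simp)
  have : ContDiffOn ℝ (⊤ : ℕ∞) (fun y => fderiv ℝ (fun z => f z a) y (Pi.single b 1)) U :=
    hd.clm_apply contDiffOn_const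
  exact this

lemma contDiffOn_diffAt {φ : (Fin n → ℝ) → ℝ} {U : Set (Fin n → ℝ)} {x : Fin n → ℝ}
    (hU : IsOpen U) (h : ContDiffOn ℝ (⊤ : ℕ∞) φ U) (hx : x ∈ U) : DifferentiableAt ℝ φ x :=
  ((h x hx).contDiffAt (hU.mem_nhds hx)).differentiableAt (by simp)

lemma contDiffOn_diffAt' {f : (Fin n → ℝ) → (Fin n → ℝ)} {U : Set (Fin n → ℝ)} {x : Fin n → ℝ}
    (hU : IsOpen U) (h : ContDiffOn ℝ (⊤ : ℕ∞) f U) (hx : x ∈ U) : DifferentiableAt ℝ f x :=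
  ((h x hx).contDiffAt (hU.mem_nhds hx)).differentiableAt (by simp)

lemma pd_congr_nhds {φ ψ : (Fin n → ℝ) → ℝ} {x : Fin n → ℝ} (h : φ =ᶠ[nhds x] ψ) (j : Fin n) :
    pd φ j x = pd ψ j x := by
  rw [pd, pd, h.fderiv_eq]

lemma pd_mul {φ ψ : (Fin n → ℝ) → ℝ} {x : Fin n → ℝ} (hφ : DifferentiableAt ℝ φ x)
    (hψ : DifferentiableAt ℝ ψ x) (j : Fin n) :
    pd (fun y => φ y * ψ y) j x = pd φ j x * ψ x + φ x * pd ψ j x := by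
  rw [pd, fderiv_fun_mul hφ hψ]
  simp only [ContinuousLinearMap.add_apply, ContinuousLinearMap.smul_apply, smul_eq_mul, pd]
  ring

lemma pd_sum {ι : Type*} (s : Finset ι) {φ : ι → (Fin n → ℝ) → ℝ} {x : Fin n → ℝ}
    (hφ : ∀ i ∈ s, DifferentiableAt ℝ (φ i) x) (j : Fin n) :
    pd (fun y => ∑ i ∈ s, φ i y) j x = ∑ i ∈ s, pd (φ i) j x := by
  rw [pd, fderiv_fun_sum hφ]
  simp [pd]

lemma pd_const (c : ℝ) (j : Fin n) (x : Fin n → ℝ) : pd (fun _ => c) j x = 0 := by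
  simp [pd]

/-- chain-rule matrix identity: `Dmat g (f y) * Dmat f y = 1` on `U`. -/
lemma Dmat_comp_one {f g : (Fin n → ℝ) → (Fin n → ℝ)} {U : Set (Fin n → ℝ)}
    (hU : IsOpen U) {y : Fin n → ℝ} (hy : y ∈ U)
    (hfd : DifferentiableAt ℝ f y) (hgd : DifferentiableAt ℝ g (f y))
    (hgf : ∀ z ∈ U, g (f z) = z) :
    Dmat g (f y) * Dmat f y = 1 := by
  have hev : (fun z => g (f z)) =ᶠ[nhds y] id := by
    filter_upwards [hU.mem_nhds hy] with z hz using hgf z hz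
  have hcomp : fderiv ℝ (g ∘ f) y = (fderiv ℝ g (f y)).comp (fderiv ℝ f y) :=
    fderiv_comp y hgd hfd
  have hid : fderiv ℝ (fun z => g (f z)) y = ContinuousLinearMap.id ℝ (Fin n → ℝ) := by
    rw [hev.fderiv_eq]; exact fderiv_id
  ext k b
  have h1 : fderiv ℝ (fun z => g (f z)) y (Pi.single b 1) = Pi.single b 1 := by rw [hid]; rfl
  have h2 : fderiv ℝ g (f y) (fderiv ℝ f y (Pi.single b 1)) = Pi.single b 1 := by
    calc fderiv ℝ g (f y) (fderiv ℝ f y (Pi.single b 1))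
        = ((fderiv ℝ g (f y)).comp (fderiv ℝ f y)) (Pi.single b 1) := rfl
      _ = fderiv ℝ (g ∘ f) y (Pi.single b 1) := by rw [hcomp]
      _ = Pi.single b 1 := h1
  have h3 : fderiv ℝ f y (Pi.single b 1) = fun c => Dmat f y c b := by
    rw [fderiv_eq_mulVec hfd]; funext c; simp [Matrix.mulVec_single]
  have h4 := congrFun (fderiv_eq_mulVec hgd (fun c => Dmat f y c b)) k
  rw [h3] at h2
  rw [h2] at h4
  have : (Pi.single b 1 : Fin n → ℝ) k = (1 : Matrix (Fin n) (Fin n) ℝ) k b := by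
    simp [Pi.single_apply, Matrix.one_apply]
  rw [this] at h4
  rw [Matrix.mul_apply]
  simpa [Matrix.mulVec, dotProduct] using h4.symm

lemma contDiffOn_diffAtF {F : Type*} [NormedAddCommGroup F] [NormedSpace ℝ F]
    {φ : (Fin n → ℝ) → F} {U : Set (Fin n → ℝ)} {x : Fin n → ℝ}
    (hU : IsOpen U) (h : ContDiffOn ℝ (⊤ : ℕ∞) φ U) (hx : x ∈ U) : DifferentiableAt ℝ φ x :=
  ((h x hx).contDiffAt (hU.mem_nhds hx)).differentiableAt (by simp)

/-- Schwarz: symmetry of second partials of the Jacobian entries. -/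
lemma pd_Dmat_symm {f : (Fin n → ℝ) → (Fin n → ℝ)} {U : Set (Fin n → ℝ)} {x : Fin n → ℝ}
    (hU : IsOpen U) (hf : ContDiffOn ℝ (⊤ : ℕ∞) f U) (hx : x ∈ U) (a b c : Fin n) :
    pd (fun y => Dmat f y a b) c x = pd (fun y => Dmat f y a c) b x := by
  set φ : (Fin n → ℝ) → ℝ := fun y => f y a with hφdef
  have hφ : ContDiffOn ℝ (⊤ : ℕ∞) φ U :=
    (ContinuousLinearMap.proj (R := ℝ) (φ := fun _ : Fin n => ℝ) a).contDiff.comp_contDiffOn hf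
  set f' : (Fin n → ℝ) → ((Fin n → ℝ) →L[ℝ] ℝ) := fderiv ℝ φ with hf'def
  have hev : ∀ᶠ y in nhds x, HasFDerivAt φ (f' y) y := by
    filter_upwards [hU.mem_nhds hx] with y hy
    exact (contDiffOn_diffAtF hU hφ hy).hasFDerivAt
  have hf'cd : ContDiffOn ℝ (⊤ : ℕ∞) f' U := by
    have : ContDiffOn ℝ (⊤ : ℕ∞) f' U := hφ.fderiv_of_isOpen hU (by simp)
    exact this
  have hx'' : HasFDerivAt f' (fderiv ℝ f' x) x := (contDiffOn_diffAtF hU hf'cd hx).hasFDerivAt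
  have hsymm := second_derivative_symmetric_of_eventually hev hx''
    (Pi.single c 1) (Pi.single b 1)
  have key : ∀ u v : Fin n → ℝ,
      fderiv ℝ (fun y => f' y v) x u = fderiv ℝ f' x u v := by
    intro u v
    have : (fun y => f' y v) = ⇑(ContinuousLinearMap.apply ℝ ℝ v) ∘ f' := rfl
    rw [this, fderiv_comp x (ContinuousLinearMap.apply ℝ ℝ v).differentiableAt
      (contDiffOn_diffAtF hU hf'cd hx)]
    simp
  have e1 : pd (fun y => Dmat f y a b) c x = fderiv ℝ f' x (Pi.single c 1) (Pi.single b 1) := by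
    rw [pd, show (fun y => Dmat f y a b) = fun y => f' y (Pi.single b 1) from rfl, key]
  have e2 : pd (fun y => Dmat f y a c) b x = fderiv ℝ f' x (Pi.single b 1) (Pi.single c 1) := by
    rw [pd, show (fun y => Dmat f y a c) = fun y => f' y (Pi.single c 1) from rfl, key]
  rw [e1, e2, hsymm]

section helpers
variable {E F G : Type*} [NormedAddCommGroup E] [NormedSpace ℝ E]
  [NormedAddCommGroup F] [NormedSpace ℝ F] [NormedAddCommGroup G] [NormedSpace ℝ G]

lemma fderiv_pi_apply {Ψ : E → (Fin n → ℝ)} {z : E} (h : DifferentiableAt ℝ Ψ z)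
    (v : E) (i : Fin n) : fderiv ℝ Ψ z v i = fderiv ℝ (fun w => Ψ w i) z v := by
  have hc := ((ContinuousLinearMap.proj (R := ℝ) (φ := fun _ : Fin n => ℝ) i).hasFDerivAt.comp z
    h.hasFDerivAt).fderiv
  rw [show (fun w => Ψ w i) = ⇑(ContinuousLinearMap.proj (R := ℝ) (φ := fun _ : Fin n => ℝ) i) ∘ Ψ
    from rfl, hc]
  rfl

lemma fderiv_prod_fst' {Φ : E → F × G} {z : E} (h1 : DifferentiableAt ℝ (fun w => (Φ w).1) z)
    (h2 : DifferentiableAt ℝ (fun w => (Φ w).2) z) (v : E) :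
    (fderiv ℝ Φ z v).1 = fderiv ℝ (fun w => (Φ w).1) z v ∧
    (fderiv ℝ Φ z v).2 = fderiv ℝ (fun w => (Φ w).2) z v := by
  have hΦ : HasFDerivAt Φ ((fderiv ℝ (fun w => (Φ w).1) z).prod (fderiv ℝ (fun w => (Φ w).2) z)) z := by
    exact HasFDerivAt.prodMk h1.hasFDerivAt h2.hasFDerivAt
  rw [hΦ.fderiv]
  exact ⟨rfl, rfl⟩

end helpers

section helpers2
variable {F G H : Type*} [NormedAddCommGroup F] [NormedSpace ℝ F]
  [NormedAddCommGroup G] [NormedSpace ℝ G] [NormedAddCommGroup H] [NormedSpace ℝ H]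

lemma fderiv_comp_fst' {χ : F → H} {z : F × G} (h : DifferentiableAt ℝ χ z.1) (v : F × G) :
    fderiv ℝ (fun w : F × G => χ w.1) z v = fderiv ℝ χ z.1 v.1 := by
  have := (h.hasFDerivAt.comp z (hasFDerivAt_fst (p := z))).fderiv
  rw [show (fun w : F × G => χ w.1) = χ ∘ Prod.fst from rfl, this]
  rfl

lemma fderiv_snd_proj {z : F × (Fin n → ℝ)} (k : Fin n) (v : F × (Fin n → ℝ)) :
    fderiv ℝ (fun w : F × (Fin n → ℝ) => w.2 k) z v = v.2 k := by
  have : (fun w : F × (Fin n → ℝ) => w.2 k) =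
      ⇑((ContinuousLinearMap.proj (R := ℝ) (φ := fun _ : Fin n => ℝ) k).comp
        (ContinuousLinearMap.snd ℝ F (Fin n → ℝ))) := rfl
  rw [this, ContinuousLinearMap.fderiv]
  rfl

lemma diffAt_snd_proj {z : F × (Fin n → ℝ)} (k : Fin n) :
    DifferentiableAt ℝ (fun w : F × (Fin n → ℝ) => w.2 k) z := by
  have : (fun w : F × (Fin n → ℝ) => w.2 k) =
      ⇑((ContinuousLinearMap.proj (R := ℝ) (φ := fun _ : Fin n => ℝ) k).comp
        (ContinuousLinearMap.snd ℝ F (Fin n → ℝ))) := rfl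
  rw [this]
  exact ContinuousLinearMap.differentiableAt _

end helpers2

/-- The derivative of the cotangent lift. -/
lemma fderiv_cotLift {f g : (Fin n → ℝ) → (Fin n → ℝ)} {U V : Set (Fin n → ℝ)}
    (hU : IsOpen U) (hV : IsOpen V) (hf : ContDiffOn ℝ (⊤ : ℕ∞) f U) (hg : ContDiffOn ℝ (⊤ : ℕ∞) g V)
    (hfU : Set.MapsTo f U V) (hgf : ∀ z ∈ U, g (f z) = z)
    {x : Fin n → ℝ} (hx : x ∈ U) (p : Fin n → ℝ) (v : (Fin n → ℝ) × (Fin n → ℝ)) :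
    fderiv ℝ (cotLift f) (x, p) v =
      ((Dmat f x).mulVec v.1,
        (Matrix.of fun i j => ∑ k, p k * pd (fun y => Dmat g (f y) k i) j x).mulVec v.1
          + (Dmat g (f x))ᵀ.mulVec v.2) := by
  classical
  set Φ : ((Fin n → ℝ) × (Fin n → ℝ)) → ((Fin n → ℝ) × (Fin n → ℝ)) :=
    fun w => (f w.1, fun i => ∑ k, Dmat g (f w.1) k i * w.2 k) with hΦdef
  -- differentiability of the entries of `Dmat g (f ·)`
  have hDgf : ∀ (k i : Fin n), ∀ y ∈ U, DifferentiableAt ℝ (fun z => Dmat g (f z) k i) y := by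
    intro k i y hy
    exact (contDiffOn_diffAt hV (Dmat_entry_contDiffOn hV hg k i) (hfU hy)).comp y
      (contDiffOn_diffAt' hU hf hy)
  have hfd : DifferentiableAt ℝ f x := contDiffOn_diffAt' hU hf hx
  -- eventual equality
  have hev : cotLift f =ᶠ[nhds (x, p)] Φ := by
    filter_upwards [(hU.prod isOpen_univ).mem_nhds (by exact ⟨hx, trivial⟩ :
      (x, p) ∈ U ×ˢ (Set.univ : Set (Fin n → ℝ)))] with w hw
    have hw1 : w.1 ∈ U := hw.1
    have hinv : (Dmat f w.1)⁻¹ = Dmat g (f w.1) :=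
      Matrix.inv_eq_left_inv (Dmat_comp_one hU hw1 (contDiffOn_diffAt' hU hf hw1)
        (contDiffOn_diffAt' hV hg (hfU hw1)) hgf)
    show (f w.1, ((Dmat f w.1)⁻¹)ᵀ.mulVec w.2) = _
    rw [hinv]
    refine Prod.ext rfl ?_
    funext i
    simp [Matrix.mulVec, dotProduct, Matrix.transpose_apply, hΦdef]
  rw [hev.fderiv_eq]
  -- differentiability of the two components of Φ
  have h1 : DifferentiableAt ℝ (fun w : (Fin n → ℝ) × (Fin n → ℝ) => (Φ w).1) (x, p) := by
    have := hfd.comp (x, p) (differentiableAt_fst (𝕜 := ℝ) (p := (x, p)))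
    exact this
  have h2c : ∀ i, DifferentiableAt ℝ
      (fun w : (Fin n → ℝ) × (Fin n → ℝ) => ∑ k, Dmat g (f w.1) k i * w.2 k) (x, p) := by
    intro i
    refine DifferentiableAt.fun_sum fun k _ => DifferentiableAt.fun_mul ?_ (diffAt_snd_proj k)
    exact (hDgf k i x hx).comp (x, p) (differentiableAt_fst (𝕜 := ℝ) (p := (x, p)))
  have h2 : DifferentiableAt ℝ (fun w : (Fin n → ℝ) × (Fin n → ℝ) => (Φ w).2) (x, p) := by
    rw [show (fun w : (Fin n → ℝ) × (Fin n → ℝ) => (Φ w).2) =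
      (fun w : (Fin n → ℝ) × (Fin n → ℝ) => fun i => ∑ k, Dmat g (f w.1) k i * w.2 k) from rfl]
    exact differentiableAt_pi.mpr fun i => h2c i
  obtain ⟨e1, e2⟩ := fderiv_prod_fst' h1 h2 v
  refine Prod.ext ?_ ?_
  · rw [e1]
    have : fderiv ℝ (fun w : (Fin n → ℝ) × (Fin n → ℝ) => f w.1) (x, p) v
        = fderiv ℝ f x v.1 := fderiv_comp_fst' (z := (x, p)) hfd v
    rw [show (fun w : (Fin n → ℝ) × (Fin n → ℝ) => (Φ w).1) =
      (fun w : (Fin n → ℝ) × (Fin n → ℝ) => f w.1) from rfl] at e1 ⊢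
    rw [this, fderiv_eq_mulVec hfd]
  · funext i
    have eπ : (fderiv ℝ (fun w : (Fin n → ℝ) × (Fin n → ℝ) => (Φ w).2) (x, p) v) i
        = fderiv ℝ (fun w : (Fin n → ℝ) × (Fin n → ℝ) => ∑ k, Dmat g (f w.1) k i * w.2 k)
          (x, p) v := fderiv_pi_apply h2 v i
    have hχ : ∀ k : Fin n, DifferentiableAt ℝ
        (fun w : (Fin n → ℝ) × (Fin n → ℝ) => Dmat g (f w.1) k i) (x, p) := fun k => by
      exact (hDgf k i x hx).comp (x, p) (differentiableAt_fst (𝕜 := ℝ) (p := (x, p)))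
    have esum : fderiv ℝ (fun w : (Fin n → ℝ) × (Fin n → ℝ) => ∑ k, Dmat g (f w.1) k i * w.2 k)
        (x, p) v = ∑ k, fderiv ℝ
          (fun w : (Fin n → ℝ) × (Fin n → ℝ) => Dmat g (f w.1) k i * w.2 k) (x, p) v := by
      rw [fderiv_fun_sum fun k _ => DifferentiableAt.fun_mul (hχ k) (diffAt_snd_proj k)]
      simp
    have eterm : ∀ k, fderiv ℝ
        (fun w : (Fin n → ℝ) × (Fin n → ℝ) => Dmat g (f w.1) k i * w.2 k) (x, p) v
        = (∑ j, v.1 j * pd (fun y => Dmat g (f y) k i) j x) * p k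
          + Dmat g (f x) k i * v.2 k := by
      intro k
      rw [fderiv_fun_mul (hχ k) (diffAt_snd_proj k)]
      simp only [ContinuousLinearMap.add_apply, ContinuousLinearMap.smul_apply, smul_eq_mul]
      rw [fderiv_snd_proj,
        fderiv_comp_fst' (χ := fun z => Dmat g (f z) k i) (z := ((x : Fin n → ℝ), p))
          (hDgf k i x hx) v,
        fderiv_apply_eq_sum_pd]
      ring
    rw [e2, eπ, esum]
    simp only [eterm]
    rw [Finset.sum_add_distrib]
    simp only [Pi.add_apply, Matrix.mulVec, dotProduct, Matrix.of_apply,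
      Matrix.transpose_apply]
    congr 1
    · simp only [Finset.sum_mul]
      rw [Finset.sum_comm]
      exact Finset.sum_congr rfl fun j _ => Finset.sum_congr rfl fun k _ => by ring

variable {n : ℕ}

section core
variable (A K J J' : Matrix (Fin n) (Fin n) ℝ)
  (F G H W Z : Fin n → Fin n → Fin n → ℝ) (p : Fin n → ℝ)

-- abbreviations
def pv (K : Matrix (Fin n) (Fin n) ℝ) (p : Fin n → ℝ) : Fin n → ℝ := fun c => ∑ k, K k c * p k
def qv (K J' : Matrix (Fin n) (Fin n) ℝ) (p : Fin n → ℝ) : Fin n → ℝ :=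
  fun s => ∑ k, pv K p k * J' k s
def rv (J : Matrix (Fin n) (Fin n) ℝ) (p : Fin n → ℝ) : Fin n → ℝ := fun s => ∑ k, p k * J k s

lemma h_pA (hKA : ∀ a b, ∑ c, K a c * A c b = if a = b then (1:ℝ) else 0) (s : Fin n) :
    ∑ k, pv K p k * A k s = p s := by
  simp only [pv, Finset.sum_mul]
  rw [Finset.sum_comm]
  have : ∀ r : Fin n, ∑ k, K r k * p r * A k s = p r * (if r = s then (1:ℝ) else 0) := by
    intro r
    rw [← hKA r s, Finset.mul_sum]
    exact Finset.sum_congr rfl fun k _ => by ring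
  simp only [this]
  simp [Finset.sum_ite_eq, Finset.mem_univ]
end core

section core2
variable (A K J J' : Matrix (Fin n) (Fin n) ℝ)
  (F G H W Z : Fin n → Fin n → Fin n → ℝ) (p : Fin n → ℝ)

lemma h_qA (hKA : ∀ a b, ∑ c, K a c * A c b = if a = b then (1:ℝ) else 0)
    (hR3 : ∀ k i, ∑ s, A k s * J s i = ∑ s, J' k s * A s i) (s : Fin n) :
    ∑ a, qv K J' p a * A a s = rv J p s := by
  simp only [qv, Finset.sum_mul]
  rw [Finset.sum_comm]
  have e1 : ∀ k, ∑ a, pv K p k * J' k a * A a s = pv K p k * ∑ a, A k a * J a s := by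
    intro k
    rw [hR3 k s, Finset.mul_sum]
    exact Finset.sum_congr rfl fun a _ => by ring
  simp only [e1]
  simp only [Finset.mul_sum]
  rw [Finset.sum_comm]
  have e2 : ∀ a, ∑ k, pv K p k * (A k a * J a s) = p a * J a s := by
    intro k
    rw [show ∑ k_1, pv K p k_1 * (A k_1 k * J k s) = (∑ k_1, pv K p k_1 * A k_1 k) * J k s by
      rw [Finset.sum_mul]; exact Finset.sum_congr rfl fun a _ => by ring]
    rw [h_pA A K p hKA]
  simp only [e2]
  rfl

lemma h_qJ (hJ'2 : ∀ k i, ∑ s, J' k s * J' s i = -(if k = i then (1:ℝ) else 0)) (s : Fin n) :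
    ∑ a, qv K J' p a * J' a s = -pv K p s := by
  simp only [qv, Finset.sum_mul]
  rw [Finset.sum_comm]
  have e1 : ∀ k, ∑ a, pv K p k * J' k a * J' a s
      = pv K p k * -(if k = s then (1:ℝ) else 0) := by
    intro k
    rw [← hJ'2 k s, Finset.mul_sum]
    exact Finset.sum_congr rfl fun a _ => by ring
  simp only [e1]
  simp [Finset.sum_ite_eq, Finset.mem_univ]

lemma h_C (hR5 : ∀ k b j, ∑ c, (W k c j * A c b + K k c * F c b j) = 0) (m j : Fin n) :
    ∑ i, A i m * (∑ k, p k * W k i j) = -∑ c, pv K p c * F c m j := by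
  have e0 : ∀ k, ∑ i, W k i j * A i m = -∑ c, K k c * F c m j := by
    intro k
    have := hR5 k m j
    rw [Finset.sum_add_distrib] at this
    linarith
  simp only [Finset.mul_sum]
  rw [Finset.sum_comm]
  have e1 : ∀ k, ∑ i, A i m * (p k * W k i j) = p k * -∑ c, K k c * F c m j := by
    intro k
    rw [← e0 k, Finset.mul_sum]
    exact Finset.sum_congr rfl fun i _ => by ring
  simp only [e1]
  simp only [pv, Finset.sum_mul, mul_neg, Finset.mul_sum, ← Finset.sum_neg_distrib]
  rw [Finset.sum_comm]
  exact Finset.sum_congr rfl fun k _ => Finset.sum_congr rfl fun c _ => by ring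

lemma h_ZA (hR4 : ∀ k i j, ∑ s, (F k s j * J s i + A k s * G s i j)
      = ∑ s, (Z k s j * A s i + J' k s * F s i j)) (k m j : Fin n) :
    ∑ i, Z k i j * A i m
      = ∑ s, F k s j * J s m + ∑ s, A k s * G s m j - ∑ s, J' k s * F s m j := by
  have := hR4 k m j
  rw [Finset.sum_add_distrib, Finset.sum_add_distrib] at this
  linarith
end core2

section helpers3
variable {n : ℕ}

lemma mulsum_comm (a b : Fin n → ℝ) (c : Fin n → Fin n → ℝ) :
    ∑ i, a i * ∑ k, b k * c i k = ∑ k, b k * ∑ i, a i * c i k := by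
  simp only [Finset.mul_sum]
  rw [Finset.sum_comm]
  exact Finset.sum_congr rfl fun _ _ => Finset.sum_congr rfl fun _ _ => by ring

lemma mulsum_contract (u : Fin n → ℝ) (M : Fin n → Fin n → ℝ) (w : Fin n → ℝ) :
    ∑ k, u k * ∑ s, M k s * w s = ∑ s, (∑ k, u k * M k s) * w s := by
  simp only [Finset.mul_sum, Finset.sum_mul]
  rw [Finset.sum_comm]
  exact Finset.sum_congr rfl fun _ _ => Finset.sum_congr rfl fun _ _ => by ring

lemma decontract (A K : Matrix (Fin n) (Fin n) ℝ) (L R : Fin n → Fin n → ℝ)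
    (hAK : ∀ a b, ∑ c, A a c * K c b = if a = b then (1:ℝ) else 0)
    (h : ∀ m j, ∑ i, A i m * L i j = ∑ i, A i m * R i j) :
    ∀ i j, L i j = R i j := by
  intro i j
  have key : ∀ T : Fin n → Fin n → ℝ, ∑ m, K m i * ∑ a, A a m * T a j = T i j := by
    intro T
    have e1 : ∀ m, ∑ a, A a m * T a j = ∑ a, T a j * A a m :=
      fun m => Finset.sum_congr rfl fun a _ => by ring
    simp only [e1]
    rw [mulsum_comm (fun m => K m i) (fun a => T a j) (fun m a => A a m)]
    have e2 : ∀ a, ∑ m, K m i * A a m = if a = i then (1:ℝ) else 0 := by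
      intro a
      rw [← hAK a i]
      exact Finset.sum_congr rfl fun m _ => by ring
    simp only [e2]
    simp [Finset.sum_ite_eq, Finset.mem_univ]
  calc L i j = ∑ m, K m i * ∑ a, A a m * L a j := (key L).symm
    _ = ∑ m, K m i * ∑ a, A a m * R a j := by
        exact Finset.sum_congr rfl fun m _ => by rw [h m j]
    _ = R i j := key R

end helpers3

section core3
variable (A K J J' : Matrix (Fin n) (Fin n) ℝ)
  (F G H W Z : Fin n → Fin n → Fin n → ℝ) (p : Fin n → ℝ)

lemma E1closed
    (hKA : ∀ a b, ∑ c, K a c * A c b = if a = b then (1:ℝ) else 0)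
    (hR4 : ∀ k i j, ∑ s, (F k s j * J s i + A k s * G s i j)
      = ∑ s, (Z k s j * A s i + J' k s * F s i j))
    (hR7 : ∀ k s j, Z k s j = ∑ q, H k s q * A q j)
    (m j : Fin n) :
    ∑ i, A i m * ∑ s, A s j * (∑ k, pv K p k * H k i s)
      = (∑ k, pv K p k * ∑ s, F k s j * J s m) + (∑ s, p s * G s m j)
        - ∑ s, qv K J' p s * F s m j := by
  have step1 : ∀ i : Fin n, ∑ s, A s j * (∑ k, pv K p k * H k i s)
      = ∑ k, pv K p k * Z k i j := by
    intro i
    rw [mulsum_comm (fun s => A s j) (fun k => pv K p k) (fun s k => H k i s)]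
    refine Finset.sum_congr rfl fun k _ => ?_
    rw [hR7 k i j]
    congr 1
    exact Finset.sum_congr rfl fun s _ => by ring
  simp only [step1]
  rw [mulsum_comm (fun i => A i m) (fun k => pv K p k) (fun i k => Z k i j)]
  have step2 : ∀ k, ∑ i, A i m * Z k i j
      = ∑ s, F k s j * J s m + ∑ s, A k s * G s m j - ∑ s, J' k s * F s m j := by
    intro k
    rw [show ∑ i, A i m * Z k i j = ∑ i, Z k i j * A i m from
      Finset.sum_congr rfl fun i _ => by ring]
    exact h_ZA A J J' F G Z hR4 k m j
  simp only [step2]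
  simp only [mul_sub, mul_add, Finset.sum_sub_distrib, Finset.sum_add_distrib]
  congr 1
  · congr 1
    rw [mulsum_contract (fun k => pv K p k) (fun k s => A k s) (fun s => G s m j)]
    exact Finset.sum_congr rfl fun s _ => by rw [h_pA A K p hKA]
  · rw [mulsum_contract (fun k => pv K p k) (fun k s => J' k s) (fun s => F s m j)]
    rfl
end core3

section core4
variable (A K J J' : Matrix (Fin n) (Fin n) ℝ)
  (F G H W Z : Fin n → Fin n → Fin n → ℝ) (p : Fin n → ℝ)

lemma E3closed
    (hKA : ∀ a b, ∑ c, K a c * A c b = if a = b then (1:ℝ) else 0)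
    (hJ'2 : ∀ k i, ∑ s, J' k s * J' s i = -(if k = i then (1:ℝ) else 0))
    (hR3 : ∀ k i, ∑ s, A k s * J s i = ∑ s, J' k s * A s i)
    (hR4 : ∀ k i j, ∑ s, (F k s j * J s i + A k s * G s i j)
      = ∑ s, (Z k s j * A s i + J' k s * F s i j))
    (hR7 : ∀ k s j, Z k s j = ∑ q, H k s q * A q j)
    (m j : Fin n) :
    ∑ i, A i m * ∑ s, A s j * (∑ k, pv K p k * (∑ a, ∑ b, J' k a * J' b i * H a s b))
      = (∑ a, qv K J' p a * ∑ c, (∑ s, F a s c * J s j) * J c m)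
        + (∑ c, (∑ s, rv J p s * G s j c) * J c m)
        + (∑ c, (∑ s, pv K p s * F s j c) * J c m) := by
  -- pull the k-sum out
  have step1 : ∀ i : Fin n,
      ∑ s, A s j * (∑ k, pv K p k * (∑ a, ∑ b, J' k a * J' b i * H a s b))
      = ∑ k, pv K p k * ∑ s, A s j * (∑ a, ∑ b, J' k a * J' b i * H a s b) :=
    fun i => mulsum_comm _ _ _
  simp only [step1]
  rw [mulsum_comm (fun i => A i m) (fun k => pv K p k) _]
  -- for fixed k, compute the inner double contraction
  have step4 : ∀ a : Fin n, ∀ i : Fin n, ∀ s : Fin n,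
      ∑ b, J' b i * H a s b = ∑ b, H a s b * J' b i :=
    fun a i s => Finset.sum_congr rfl fun b _ => by ring
  have step2 : ∀ k i s : Fin n, (∑ a, ∑ b, J' k a * J' b i * H a s b)
      = ∑ a, J' k a * ∑ b, J' b i * H a s b := by
    intro k i s
    exact Finset.sum_congr rfl fun a _ => by
      rw [Finset.mul_sum]; exact Finset.sum_congr rfl fun b _ => by ring
  simp only [step2]
  have step3 : ∀ k : Fin n,
      ∑ i, A i m * ∑ s, A s j * ∑ a, J' k a * (∑ b, J' b i * H a s b)
      = ∑ a, J' k a * ∑ i, A i m * ∑ s, A s j * (∑ b, J' b i * H a s b) := by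
    intro k
    have e : ∀ i, ∑ s, A s j * ∑ a, J' k a * (∑ b, J' b i * H a s b)
        = ∑ a, J' k a * ∑ s, A s j * (∑ b, J' b i * H a s b) :=
      fun i => mulsum_comm _ _ _
    simp only [e]
    exact mulsum_comm _ _ _
  simp only [step3]
  -- fixed a : compute ∑ i A i m * ∑ s A s j * ∑ b J' b i H a s b
  have step5 : ∀ a : Fin n,
      ∑ i, A i m * ∑ s, A s j * (∑ b, J' b i * H a s b)
      = ∑ c, J c m * (∑ s, F a s c * J s j + ∑ s, A a s * G s j c
          - ∑ s, J' a s * F s j c) := by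
    intro a
    have e1 : ∀ i, ∑ s, A s j * (∑ b, J' b i * H a s b)
        = ∑ s, A s j * (∑ b, H a s b * J' b i) := by
      intro i
      exact Finset.sum_congr rfl fun s _ => by rw [step4]
    simp only [e1]
    have e2 : ∀ s, ∑ i, A i m * (∑ b, H a s b * J' b i)
        = ∑ b, H a s b * ∑ i, A i m * J' b i :=
      fun s => mulsum_comm _ _ _
    rw [mulsum_comm (fun i => A i m) (fun s => A s j)
      (fun i s => ∑ b, H a s b * J' b i)]
    simp only [e2]
    have e3 : ∀ b, ∑ i, A i m * J' b i = ∑ c, A b c * J c m := by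
      intro b
      rw [show ∑ i, A i m * J' b i = ∑ i, J' b i * A i m from
        Finset.sum_congr rfl fun i _ => by ring, ← hR3 b m]
    simp only [e3]
    have e4 : ∀ s, ∑ b, H a s b * ∑ c, A b c * J c m
        = ∑ c, Z a s c * J c m := by
      intro s
      rw [mulsum_contract (fun b => H a s b) (fun b c => A b c) (fun c => J c m)]
      exact Finset.sum_congr rfl fun c _ => by rw [hR7 a s c]
    simp only [e4]
    have e5 : ∀ s, ∑ c, Z a s c * J c m = ∑ c, J c m * Z a s c :=
      fun s => Finset.sum_congr rfl fun c _ => by ring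
    simp only [e5]
    rw [mulsum_comm (fun s => A s j) (fun c => J c m) (fun s c => Z a s c)]
    refine Finset.sum_congr rfl fun c _ => ?_
    congr 1
    rw [show ∑ s, A s j * Z a s c = ∑ s, Z a s c * A s j from
      Finset.sum_congr rfl fun s _ => by ring]
    exact h_ZA A J J' F G Z hR4 a j c
  simp only [step5]
  -- pull out q
  rw [mulsum_contract (fun k => pv K p k) (fun k a => J' k a)
    (fun a => ∑ c, J c m * (∑ s, F a s c * J s j + ∑ s, A a s * G s j c
      - ∑ s, J' a s * F s j c))]
  have split : ∀ a : Fin n, (∑ k, pv K p k * J' k a) *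
      (∑ c, J c m * (∑ s, F a s c * J s j + ∑ s, A a s * G s j c - ∑ s, J' a s * F s j c))
      = qv K J' p a * (∑ c, (∑ s, F a s c * J s j) * J c m)
        + qv K J' p a * (∑ c, J c m * (∑ s, A a s * G s j c))
        - qv K J' p a * (∑ c, J c m * (∑ s, J' a s * F s j c)) := by
    intro a
    have : ∑ c, J c m * (∑ s, F a s c * J s j + ∑ s, A a s * G s j c
        - ∑ s, J' a s * F s j c)
        = (∑ c, (∑ s, F a s c * J s j) * J c m) + (∑ c, J c m * (∑ s, A a s * G s j c))
          - ∑ c, J c m * (∑ s, J' a s * F s j c) := by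
      simp only [mul_add, mul_sub, Finset.sum_add_distrib, Finset.sum_sub_distrib]
      congr 2
      exact Finset.sum_congr rfl fun c _ => by ring
    rw [this, qv]
    ring
  simp only [split]
  have hmid : ∑ a, qv K J' p a * (∑ c, J c m * (∑ s, A a s * G s j c))
      = ∑ c, (∑ s, rv J p s * G s j c) * J c m := by
    rw [mulsum_comm (fun a => qv K J' p a) (fun c => J c m)
      (fun a c => ∑ s, A a s * G s j c)]
    refine Finset.sum_congr rfl fun c _ => ?_
    rw [mulsum_contract (fun a => qv K J' p a) (fun a s => A a s) (fun s => G s j c)]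
    rw [show ∑ s, (∑ a, qv K J' p a * A a s) * G s j c = ∑ s, rv J p s * G s j c from
      Finset.sum_congr rfl fun s _ => by rw [h_qA A K J J' p hKA hR3]]
    ring
  have hthird : ∑ a, qv K J' p a * (∑ c, J c m * (∑ s, J' a s * F s j c))
      = -∑ c, (∑ s, pv K p s * F s j c) * J c m := by
    rw [mulsum_comm (fun a => qv K J' p a) (fun c => J c m)
      (fun a c => ∑ s, J' a s * F s j c)]
    rw [← Finset.sum_neg_distrib]
    refine Finset.sum_congr rfl fun c _ => ?_
    rw [mulsum_contract (fun a => qv K J' p a) (fun a s => J' a s) (fun s => F s j c)]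
    rw [show ∑ s, (∑ a, qv K J' p a * J' a s) * F s j c = ∑ s, -pv K p s * F s j c from
      Finset.sum_congr rfl fun s _ => by rw [h_qJ K J' p hJ'2 s]]
    rw [show ∑ s, -pv K p s * F s j c = -∑ s, pv K p s * F s j c by
      rw [← Finset.sum_neg_distrib]; exact Finset.sum_congr rfl fun s _ => by ring]
    ring
  rw [Finset.sum_sub_distrib, Finset.sum_add_distrib, hmid, hthird]
  ring
end core4

section core5
variable (A K J J' : Matrix (Fin n) (Fin n) ℝ)
  (F G H W Z : Fin n → Fin n → Fin n → ℝ) (p : Fin n → ℝ)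

lemma AtB2A
    (hKA : ∀ a b, ∑ c, K a c * A c b = if a = b then (1:ℝ) else 0)
    (hJ'2 : ∀ k i, ∑ s, J' k s * J' s i = -(if k = i then (1:ℝ) else 0))
    (hR3 : ∀ k i, ∑ s, A k s * J s i = ∑ s, J' k s * A s i)
    (hR4 : ∀ k i j, ∑ s, (F k s j * J s i + A k s * G s i j)
      = ∑ s, (Z k s j * A s i + J' k s * F s i j))
    (hR7 : ∀ k s j, Z k s j = ∑ q, H k s q * A q j)
    (m j : Fin n) :
    ∑ i, A i m * (∑ s, ((1/2 : ℝ) * ∑ k, pv K p k * (H k i s - H k s i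
        + (∑ a, ∑ b, J' k a * J' b i * H a s b) - ∑ a, ∑ b, J' k a * J' b s * H a i b)) * A s j)
    = (1/2) * ( (((∑ k, pv K p k * ∑ s, F k s j * J s m) + (∑ s, p s * G s m j)
          - ∑ s, qv K J' p s * F s m j)
      - ((∑ k, pv K p k * ∑ s, F k s m * J s j) + (∑ s, p s * G s j m)
          - ∑ s, qv K J' p s * F s j m))
      + (((∑ a, qv K J' p a * ∑ c, (∑ s, F a s c * J s j) * J c m)
          + (∑ c, (∑ s, rv J p s * G s j c) * J c m)
          + (∑ c, (∑ s, pv K p s * F s j c) * J c m))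
      - ((∑ a, qv K J' p a * ∑ c, (∑ s, F a s c * J s m) * J c j)
          + (∑ c, (∑ s, rv J p s * G s m c) * J c j)
          + (∑ c, (∑ s, pv K p s * F s m c) * J c j))) ) := by
  have atomsplit : ∀ i s : Fin n, ∑ k, pv K p k * (H k i s - H k s i
        + (∑ a, ∑ b, J' k a * J' b i * H a s b) - ∑ a, ∑ b, J' k a * J' b s * H a i b)
      = (∑ k, pv K p k * H k i s) - (∑ k, pv K p k * H k s i)
        + (∑ k, pv K p k * (∑ a, ∑ b, J' k a * J' b i * H a s b))
        - (∑ k, pv K p k * (∑ a, ∑ b, J' k a * J' b s * H a i b)) := by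
    intro i s
    simp only [mul_sub, mul_add, Finset.sum_sub_distrib, Finset.sum_add_distrib]
  have inner : ∀ i : Fin n, ∑ s, ((1/2 : ℝ) * ∑ k, pv K p k * (H k i s - H k s i
        + (∑ a, ∑ b, J' k a * J' b i * H a s b) - ∑ a, ∑ b, J' k a * J' b s * H a i b)) * A s j
      = (1/2) * ((∑ s, A s j * (∑ k, pv K p k * H k i s))
        - (∑ s, A s j * (∑ k, pv K p k * H k s i))
        + (∑ s, A s j * (∑ k, pv K p k * (∑ a, ∑ b, J' k a * J' b i * H a s b)))
        - (∑ s, A s j * (∑ k, pv K p k * (∑ a, ∑ b, J' k a * J' b s * H a i b)))) := by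
    intro i
    rw [show ∑ s, ((1/2 : ℝ) * ∑ k, pv K p k * (H k i s - H k s i
        + (∑ a, ∑ b, J' k a * J' b i * H a s b) - ∑ a, ∑ b, J' k a * J' b s * H a i b)) * A s j
      = ∑ s, (1/2 : ℝ) * (A s j * (∑ k, pv K p k * H k i s)
        - A s j * (∑ k, pv K p k * H k s i)
        + A s j * (∑ k, pv K p k * (∑ a, ∑ b, J' k a * J' b i * H a s b))
        - A s j * (∑ k, pv K p k * (∑ a, ∑ b, J' k a * J' b s * H a i b))) from
      Finset.sum_congr rfl fun s _ => by rw [atomsplit i s]; ring]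
    rw [← Finset.mul_sum]
    congr 1
    simp only [Finset.sum_sub_distrib, Finset.sum_add_distrib]
  rw [show ∑ i, A i m * (∑ s, ((1/2 : ℝ) * ∑ k, pv K p k * (H k i s - H k s i
        + (∑ a, ∑ b, J' k a * J' b i * H a s b) - ∑ a, ∑ b, J' k a * J' b s * H a i b)) * A s j)
      = ∑ i, (1/2 : ℝ) * (A i m * (∑ s, A s j * (∑ k, pv K p k * H k i s))
        - A i m * (∑ s, A s j * (∑ k, pv K p k * H k s i))
        + A i m * (∑ s, A s j * (∑ k, pv K p k * (∑ a, ∑ b, J' k a * J' b i * H a s b)))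
        - A i m * (∑ s, A s j * (∑ k, pv K p k * (∑ a, ∑ b, J' k a * J' b s * H a i b)))) from
    Finset.sum_congr rfl fun i _ => by rw [inner i]; ring]
  rw [← Finset.mul_sum]
  congr 1
  simp only [Finset.sum_sub_distrib, Finset.sum_add_distrib]
  have hT1 := E1closed A K J J' F G H Z p hKA hR4 hR7 m j
  have hT3 := E3closed A K J J' F G H Z p hKA hJ'2 hR3 hR4 hR7 m j
  have hT2 : ∑ i, A i m * (∑ s, A s j * (∑ k, pv K p k * H k s i))
      = (∑ k, pv K p k * ∑ s, F k s m * J s j) + (∑ s, p s * G s j m)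
        - ∑ s, qv K J' p s * F s j m := by
    rw [mulsum_comm (fun i => A i m) (fun s => A s j)
      (fun i s => ∑ k, pv K p k * H k s i)]
    exact E1closed A K J J' F G H Z p hKA hR4 hR7 j m
  have hT4 : ∑ i, A i m * (∑ s, A s j * (∑ k, pv K p k *
        (∑ a, ∑ b, J' k a * J' b s * H a i b)))
      = (∑ a, qv K J' p a * ∑ c, (∑ s, F a s c * J s m) * J c j)
        + (∑ c, (∑ s, rv J p s * G s m c) * J c j)
        + (∑ c, (∑ s, pv K p s * F s m c) * J c j) := by
    rw [mulsum_comm (fun i => A i m) (fun s => A s j)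
      (fun i s => ∑ k, pv K p k * (∑ a, ∑ b, J' k a * J' b s * H a i b))]
    exact E3closed A K J J' F G H Z p hKA hJ'2 hR3 hR4 hR7 j m
  rw [hT1, hT2, hT3, hT4]
  ring
end core5

section core6
variable (A K J J' : Matrix (Fin n) (Fin n) ℝ)
  (F G H W Z : Fin n → Fin n → Fin n → ℝ) (p : Fin n → ℝ)

lemma B1expand (m j : Fin n) :
    (1/2 : ℝ) * ∑ w, p w * (G w m j - G w j m
        + (∑ s, ∑ q, J w s * J q m * G s j q) - ∑ s, ∑ q, J w s * J q j * G s m q)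
    = (1/2) * ((∑ s, p s * G s m j) - (∑ s, p s * G s j m)
        + (∑ c, (∑ s, rv J p s * G s j c) * J c m)
        - (∑ c, (∑ s, rv J p s * G s m c) * J c j)) := by
  have third : ∀ m' j' : Fin n,
      ∑ w, p w * (∑ s, ∑ q, J w s * J q m' * G s j' q)
      = ∑ c, (∑ s, rv J p s * G s j' c) * J c m' := by
    intro m' j'
    have e1 : ∀ w, ∑ s, ∑ q, J w s * J q m' * G s j' q
        = ∑ s, J w s * (∑ q, J q m' * G s j' q) := fun w =>
      Finset.sum_congr rfl fun s _ => by
        rw [Finset.mul_sum]; exact Finset.sum_congr rfl fun q _ => by ring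
    simp only [e1]
    rw [mulsum_contract p (fun w s => J w s) (fun s => ∑ q, J q m' * G s j' q)]
    simp only [rv]
    rw [mulsum_comm (fun s => ∑ k, p k * J k s) (fun q => J q m') (fun s q => G s j' q)]
    exact Finset.sum_congr rfl fun c _ => by ring
  congr 1
  simp only [mul_sub, mul_add, Finset.sum_sub_distrib, Finset.sum_add_distrib]
  rw [third m j, third j m]

theorem core_identity
    (hKA : ∀ a b, ∑ c, K a c * A c b = if a = b then (1:ℝ) else 0)
    (hAK : ∀ a b, ∑ c, A a c * K c b = if a = b then (1:ℝ) else 0)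
    (hJ'2 : ∀ k i, ∑ s, J' k s * J' s i = -(if k = i then (1:ℝ) else 0))
    (hR3 : ∀ k i, ∑ s, A k s * J s i = ∑ s, J' k s * A s i)
    (hR4 : ∀ k i j, ∑ s, (F k s j * J s i + A k s * G s i j)
      = ∑ s, (Z k s j * A s i + J' k s * F s i j))
    (hR5 : ∀ k b j, ∑ c, (W k c j * A c b + K k c * F c b j) = 0)
    (hR6 : ∀ a b c, F a b c = F a c b)
    (hR7 : ∀ k s j, Z k s j = ∑ q, H k s q * A q j) :
    ∀ i j,
    ∑ s, (∑ k, p k * W k i s) * J s j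
      + ∑ k, K k i * ((1/2 : ℝ) * ∑ w, p w * (G w k j - G w j k
          + (∑ s, ∑ q, J w s * J q k * G s j q) - ∑ s, ∑ q, J w s * J q j * G s k q))
    = ∑ s, ((1/2 : ℝ) * ∑ k, pv K p k * (H k i s - H k s i
          + (∑ a, ∑ b, J' k a * J' b i * H a s b)
          - ∑ a, ∑ b, J' k a * J' b s * H a i b)) * A s j
      + ∑ s, J' s i * (∑ k, p k * W k s j) := by
  apply decontract A K _ _ hAK
  intro m j
  simp only [mul_add, Finset.sum_add_distrib]
  -- L1 term
  have hL1 : ∑ i, A i m * (∑ s, (∑ k, p k * W k i s) * J s j)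
      = -∑ s, (∑ c, pv K p c * F c m s) * J s j := by
    have e1 : ∀ i, ∑ s, (∑ k, p k * W k i s) * J s j
        = ∑ s, J s j * (∑ k, p k * W k i s) :=
      fun i => Finset.sum_congr rfl fun s _ => by ring
    simp only [e1]
    rw [mulsum_comm (fun i => A i m) (fun s => J s j) (fun i s => ∑ k, p k * W k i s)]
    rw [← Finset.sum_neg_distrib]
    refine Finset.sum_congr rfl fun s _ => ?_
    rw [h_C A K F W p hR5 m s]
    ring
  -- L2 term
  have hL2 : ∑ i, A i m * ∑ k, K k i * ((1/2 : ℝ) * ∑ w, p w * (G w k j - G w j k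
        + (∑ s, ∑ q, J w s * J q k * G s j q) - ∑ s, ∑ q, J w s * J q j * G s k q))
      = (1/2 : ℝ) * ((∑ s, p s * G s m j) - (∑ s, p s * G s j m)
        + (∑ c, (∑ s, rv J p s * G s j c) * J c m)
        - (∑ c, (∑ s, rv J p s * G s m c) * J c j)) := by
    have e1 : ∀ i, ∑ k, K k i * ((1/2 : ℝ) * ∑ w, p w * (G w k j - G w j k
        + (∑ s, ∑ q, J w s * J q k * G s j q) - ∑ s, ∑ q, J w s * J q j * G s k q))
        = ∑ k, ((1/2 : ℝ) * ∑ w, p w * (G w k j - G w j k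
        + (∑ s, ∑ q, J w s * J q k * G s j q) - ∑ s, ∑ q, J w s * J q j * G s k q)) * K k i :=
      fun i => Finset.sum_congr rfl fun k _ => by ring
    simp only [e1]
    rw [mulsum_comm (fun i => A i m)
      (fun k => (1/2 : ℝ) * ∑ w, p w * (G w k j - G w j k
        + (∑ s, ∑ q, J w s * J q k * G s j q) - ∑ s, ∑ q, J w s * J q j * G s k q))
      (fun i k => K k i)]
    have e2 : ∀ k, ∑ i, A i m * K k i = if k = m then (1:ℝ) else 0 := by
      intro k
      rw [← hKA k m]
      exact Finset.sum_congr rfl fun i _ => by ring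
    simp only [e2, mul_ite, mul_one, mul_zero, Finset.sum_ite_eq', Finset.mem_univ, if_true]
    exact B1expand J G p m j
  -- R1 term
  have hR1 := AtB2A A K J J' F G H Z p hKA hJ'2 hR3 hR4 hR7 m j
  -- R2 term
  have hR2 : ∑ i, A i m * ∑ s, J' s i * (∑ k, p k * W k s j)
      = -∑ c, (∑ a, pv K p a * F a c j) * J c m := by
    have e1 : ∀ i, ∑ s, J' s i * (∑ k, p k * W k s j)
        = ∑ s, (∑ k, p k * W k s j) * J' s i :=
      fun i => Finset.sum_congr rfl fun s _ => by ring
    simp only [e1]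
    rw [mulsum_comm (fun i => A i m) (fun s => ∑ k, p k * W k s j) (fun i s => J' s i)]
    have e2 : ∀ s, ∑ i, A i m * J' s i = ∑ c, A s c * J c m := by
      intro s
      rw [show ∑ i, A i m * J' s i = ∑ i, J' s i * A i m from
        Finset.sum_congr rfl fun i _ => by ring, ← hR3 s m]
    simp only [e2]
    rw [mulsum_contract (fun s => ∑ k, p k * W k s j) (fun s c => A s c) (fun c => J c m)]
    rw [← Finset.sum_neg_distrib]
    refine Finset.sum_congr rfl fun c _ => ?_
    rw [show ∑ s, (∑ k, p k * W k s j) * A s c = ∑ s, A s c * (∑ k, p k * W k s j) from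
      Finset.sum_congr rfl fun s _ => by ring]
    rw [h_C A K F W p hR5 c j]
    ring
  rw [hL1, hL2, hR1, hR2]
  -- final bookkeeping identities
  have hqF : ∑ s, qv K J' p s * F s m j = ∑ s, qv K J' p s * F s j m :=
    Finset.sum_congr rfl fun s _ => by rw [hR6 s m j]
  have hD3 : ∑ a, qv K J' p a * ∑ c, (∑ s, F a s c * J s j) * J c m
      = ∑ a, qv K J' p a * ∑ c, (∑ s, F a s c * J s m) * J c j := by
    refine Finset.sum_congr rfl fun a _ => ?_
    congr 1
    simp only [Finset.sum_mul]
    conv_lhs => rw [Finset.sum_comm]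
    exact Finset.sum_congr rfl fun x _ => Finset.sum_congr rfl fun y _ => by
      rw [hR6 a y x]; ring
  have hD1m : ∑ k, pv K p k * ∑ s, F k s j * J s m
      = ∑ c, (∑ a, pv K p a * F a c j) * J c m := by
    have e1 : ∀ k, ∑ s, F k s j * J s m = ∑ s, J s m * F k s j :=
      fun k => Finset.sum_congr rfl fun s _ => by ring
    simp only [e1]
    rw [mulsum_comm (fun k => pv K p k) (fun s => J s m) (fun k s => F k s j)]
    exact Finset.sum_congr rfl fun c _ => by ring
  have hD1j : ∑ k, pv K p k * ∑ s, F k s m * J s j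
      = ∑ s, (∑ c, pv K p c * F c m s) * J s j := by
    have e1 : ∀ k, ∑ s, F k s m * J s j = ∑ s, J s j * F k s m :=
      fun k => Finset.sum_congr rfl fun s _ => by ring
    simp only [e1]
    rw [mulsum_comm (fun k => pv K p k) (fun s => J s j) (fun k s => F k s m)]
    refine Finset.sum_congr rfl fun s _ => ?_
    rw [show ∑ c, pv K p c * F c m s = ∑ c, pv K p c * F c s m from
      Finset.sum_congr rfl fun c _ => by rw [hR6 c m s]]
    ring
  have hPFm : ∑ c, (∑ s, pv K p s * F s j c) * J c m
      = ∑ c, (∑ a, pv K p a * F a c j) * J c m :=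
    Finset.sum_congr rfl fun c _ => by
      rw [show ∑ s, pv K p s * F s j c = ∑ s, pv K p s * F s c j from
        Finset.sum_congr rfl fun s _ => by rw [hR6 s j c]]
  have hPFj : ∑ c, (∑ s, pv K p s * F s m c) * J c j
      = ∑ s, (∑ c, pv K p c * F c m s) * J s j :=
    Finset.sum_congr rfl fun c _ => by
      rw [show ∑ s, pv K p s * F s m c = ∑ s, pv K p s * F s c m from
        Finset.sum_congr rfl fun s _ => by rw [hR6 s m c]]
  linarith [hqF, hD3, hD1m, hD1j, hPFm, hPFj]
end core6

end SatoAux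

/-- the cotangent lift `f̃` of a smooth diffeomorphism `f : U → V` is
`(J̃₁, J̃₂)`-holomorphic (Satô lifts) iff `f` is `(J₁,J₂)`-holomorphic. -/
theorem statement13 (n : ℕ) (U V : Set (Fin n → ℝ)) (hU : IsOpen U) (hV : IsOpen V)
    (f g : (Fin n → ℝ) → (Fin n → ℝ))
    (hf : ContDiffOn ℝ (⊤ : ℕ∞) f U) (hg : ContDiffOn ℝ (⊤ : ℕ∞) g V)
    (hfU : Set.MapsTo f U V) (hgV : Set.MapsTo g V U)
    (hgf : ∀ x ∈ U, g (f x) = x) (hfg : ∀ y ∈ V, f (g y) = y)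
    (J₁ J₂ : (Fin n → ℝ) → Matrix (Fin n) (Fin n) ℝ)
    (hJ₁smooth : ∀ k j : Fin n, ContDiffOn ℝ (⊤ : ℕ∞) (fun x => J₁ x k j) U)
    (hJ₂smooth : ∀ k j : Fin n, ContDiffOn ℝ (⊤ : ℕ∞) (fun x => J₂ x k j) V)
    (hJ₁ : ∀ x ∈ U, J₁ x * J₁ x = -1) (hJ₂ : ∀ y ∈ V, J₂ y * J₂ y = -1) :
    -- `f̃` is `(J̃₁, J̃₂)`-holomorphic
    (∀ x ∈ U, ∀ (p : Fin n → ℝ) (v : (Fin n → ℝ) × (Fin n → ℝ)),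
        fderiv ℝ (cotLift f) (x, p) (SatoMap J₁ x p v) =
          SatoMap J₂ (f x) (((Dmat f x)⁻¹)ᵀ.mulVec p)
            (fderiv ℝ (cotLift f) (x, p) v)) ↔
      -- `f` is `(J₁,J₂)`-holomorphic
      (∀ x ∈ U, Dmat f x * J₁ x = J₂ (f x) * Dmat f x) := by
  classical
  constructor
  · -- lift holomorphic → base holomorphic
    intro hlift x hx
    apply Matrix.ext
    intro i j
    have h := hlift x hx 0 (Pi.single j 1, 0)
    rw [fderiv_cotLift hU hV hf hg hfU hgf hx 0 (SatoMap J₁ x 0 (Pi.single j 1, 0)),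
        fderiv_cotLift hU hV hf hg hfU hgf hx 0 (Pi.single j 1, 0)] at h
    have h1 := congrArg Prod.fst h
    simp only [SatoMap] at h1
    rw [Matrix.mulVec_mulVec, Matrix.mulVec_mulVec] at h1
    have h2 := congrFun h1 i
    simpa [Matrix.mulVec_single] using h2
  · -- base holomorphic → lift holomorphic
    intro hholo x hx p v
    have hfd : DifferentiableAt ℝ f x := contDiffOn_diffAt' hU hf hx
    have hgd : DifferentiableAt ℝ g (f x) := contDiffOn_diffAt' hV hg (hfU hx)
    set A : Matrix (Fin n) (Fin n) ℝ := Dmat f x with hA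
    set K : Matrix (Fin n) (Fin n) ℝ := Dmat g (f x) with hK
    have hKA : K * A = 1 := Dmat_comp_one hU hx hfd hgd hgf
    have hAK : A * K = 1 := mul_eq_one_comm.mp hKA
    have hinv : A⁻¹ = K := Matrix.inv_eq_left_inv hKA
    -- scalar level hypotheses for the core identity
    have hKAe : ∀ a b, ∑ c, K a c * A c b = if a = b then (1:ℝ) else 0 := by
      intro a b
      have := congrFun (congrFun hKA a) b
      simpa [Matrix.mul_apply, Matrix.one_apply] using this
    have hAKe : ∀ a b, ∑ c, A a c * K c b = if a = b then (1:ℝ) else 0 := by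
      intro a b
      have := congrFun (congrFun hAK a) b
      simpa [Matrix.mul_apply, Matrix.one_apply] using this
    have hJ'2e : ∀ k i, ∑ s, J₂ (f x) k s * J₂ (f x) s i = -(if k = i then (1:ℝ) else 0) := by
      intro k i
      have := congrFun (congrFun (hJ₂ (f x) (hfU hx)) k) i
      simpa [Matrix.mul_apply, Matrix.one_apply, Matrix.neg_apply] using this
    have hR3e : ∀ k i, ∑ s, A k s * J₁ x s i = ∑ s, J₂ (f x) k s * A s i := by
      intro k i
      have := congrFun (congrFun (hholo x hx) k) i
      simpa [Matrix.mul_apply] using this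
    -- differentiability of the various entries
    have hdA : ∀ a b, DifferentiableAt ℝ (fun y => Dmat f y a b) x :=
      fun a b => contDiffOn_diffAt hU (Dmat_entry_contDiffOn hU hf a b) hx
    have hdK : ∀ a b, DifferentiableAt ℝ (fun y => Dmat g (f y) a b) x :=
      fun a b => (contDiffOn_diffAt hV (Dmat_entry_contDiffOn hV hg a b) (hfU hx)).comp x hfd
    have hdJ1 : ∀ a b, DifferentiableAt ℝ (fun y => J₁ y a b) x :=
      fun a b => contDiffOn_diffAt hU (hJ₁smooth a b) hx
    have hdJ2f : ∀ a b, DifferentiableAt ℝ (fun y => J₂ (f y) a b) x :=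
      fun a b => (contDiffOn_diffAt hV (hJ₂smooth a b) (hfU hx)).comp x hfd
    -- R4 : differentiated holomorphy relation
    have hR4e : ∀ k i j, ∑ s, (pd (fun y => Dmat f y k s) j x * J₁ x s i
          + A k s * pd (fun y => J₁ y s i) j x)
        = ∑ s, (pd (fun y => J₂ (f y) k s) j x * A s i
          + J₂ (f x) k s * pd (fun y => Dmat f y s i) j x) := by
      intro k i j
      have hev : (fun y => ∑ s, Dmat f y k s * J₁ y s i)
          =ᶠ[nhds x] (fun y => ∑ s, J₂ (f y) k s * Dmat f y s i) := by
        filter_upwards [hU.mem_nhds hx] with y hy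
        have := congrFun (congrFun (hholo y hy) k) i
        simpa [Matrix.mul_apply] using this
      have e1 := pd_congr_nhds hev j
      rw [pd_sum Finset.univ (fun s _ => (hdA k s).fun_mul (hdJ1 s i)) j,
          pd_sum Finset.univ (fun s _ => (hdJ2f k s).fun_mul (hdA s i)) j] at e1
      calc ∑ s, (pd (fun y => Dmat f y k s) j x * J₁ x s i
            + A k s * pd (fun y => J₁ y s i) j x)
          = ∑ s, pd (fun y => Dmat f y k s * J₁ y s i) j x := by
            refine Finset.sum_congr rfl fun s _ => ?_
            rw [pd_mul (hdA k s) (hdJ1 s i)]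
        _ = ∑ s, pd (fun y => J₂ (f y) k s * Dmat f y s i) j x := e1
        _ = _ := by
            refine Finset.sum_congr rfl fun s _ => ?_
            rw [pd_mul (hdJ2f k s) (hdA s i)]
    -- R5 : differentiated inverse relation
    have hR5e : ∀ k b j, ∑ c, (pd (fun y => Dmat g (f y) k c) j x * A c b
          + K k c * pd (fun y => Dmat f y c b) j x) = 0 := by
      intro k b j
      have hev : (fun y => ∑ c, Dmat g (f y) k c * Dmat f y c b)
          =ᶠ[nhds x] (fun _ => (1 : Matrix (Fin n) (Fin n) ℝ) k b) := by
        filter_upwards [hU.mem_nhds hx] with y hy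
        have h1 : Dmat g (f y) * Dmat f y = 1 :=
          Dmat_comp_one hU hy (contDiffOn_diffAt' hU hf hy)
            (contDiffOn_diffAt' hV hg (hfU hy)) hgf
        have := congrFun (congrFun h1 k) b
        simpa [Matrix.mul_apply] using this
      have e1 := pd_congr_nhds hev j
      rw [pd_sum Finset.univ (fun c _ => (hdK k c).fun_mul (hdA c b)) j, pd_const] at e1
      calc ∑ c, (pd (fun y => Dmat g (f y) k c) j x * A c b
            + K k c * pd (fun y => Dmat f y c b) j x)
          = ∑ c, pd (fun y => Dmat g (f y) k c * Dmat f y c b) j x := by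
            refine Finset.sum_congr rfl fun c _ => ?_
            rw [pd_mul (hdK k c) (hdA c b)]
        _ = 0 := e1
    have hR6e : ∀ a b c, pd (fun y => Dmat f y a b) c x = pd (fun y => Dmat f y a c) b x :=
      pd_Dmat_symm hU hf hx
    have hR7e : ∀ k s j, pd (fun y => J₂ (f y) k s) j x
        = ∑ q, pd (fun z => J₂ z k s) q (f x) * A q j := by
      intro k s j
      exact pd_comp (contDiffOn_diffAt hV (hJ₂smooth k s) (hfU hx)) hfd j
    -- the core matrix identity
    set Cm : Matrix (Fin n) (Fin n) ℝ :=
      Matrix.of fun i j => ∑ k, p k * pd (fun y => Dmat g (f y) k i) j x with hCm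
    have hM1 : A * J₁ x = J₂ (f x) * A := hholo x hx
    have hJK : J₁ x * K = K * J₂ (f x) := by
      calc J₁ x * K = (K * A) * (J₁ x * K) := by rw [hKA, one_mul]
        _ = K * ((A * J₁ x) * K) := by simp only [Matrix.mul_assoc]
        _ = K * ((J₂ (f x) * A) * K) := by rw [hM1]
        _ = (K * J₂ (f x)) * (A * K) := by simp only [Matrix.mul_assoc]
        _ = K * J₂ (f x) := by rw [hAK, Matrix.mul_one]
    have hM2 : Kᵀ * (J₁ x)ᵀ = (J₂ (f x))ᵀ * Kᵀ := by
      rw [← Matrix.transpose_mul, ← Matrix.transpose_mul, hJK]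
    have hM3 : Cm * J₁ x + Kᵀ * Bblock J₁ x p
        = Bblock J₂ (f x) (Kᵀ.mulVec p) * A + (J₂ (f x))ᵀ * Cm := by
      have hcore := core_identity A K (J₁ x) (J₂ (f x))
        (fun a b c => pd (fun y => Dmat f y a b) c x)
        (fun s i j => pd (fun y => J₁ y s i) j x)
        (fun k s q => pd (fun z => J₂ z k s) q (f x))
        (fun k i j => pd (fun y => Dmat g (f y) k i) j x)
        (fun k s j => pd (fun y => J₂ (f y) k s) j x)
        p hKAe hAKe hJ'2e hR3e hR4e hR5e hR6e hR7e
      apply Matrix.ext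
      intro i j
      have hpv' : Kᵀ.mulVec p = pv K p := by
        funext c
        simp [pv, Matrix.mulVec, dotProduct, Matrix.transpose_apply]
      simp only [Matrix.add_apply, Matrix.mul_apply, Matrix.transpose_apply, Bblock,
        Matrix.of_apply, hCm, hpv']
      exact hcore i j
    -- assemble the vector identity
    rw [fderiv_cotLift hU hV hf hg hfU hgf hx p (SatoMap J₁ x p v),
        fderiv_cotLift hU hV hf hg hfU hgf hx p v]
    show ((Dmat f x).mulVec (SatoMap J₁ x p v).1, _) = _
    simp only [SatoMap, hinv]
    refine Prod.ext ?_ ?_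
    · show A.mulVec ((J₁ x).mulVec v.1) = (J₂ (f x)).mulVec (A.mulVec v.1)
      rw [Matrix.mulVec_mulVec, Matrix.mulVec_mulVec, hM1]
    · show Cm.mulVec ((J₁ x).mulVec v.1)
          + Kᵀ.mulVec ((Bblock J₁ x p).mulVec v.1 + (J₁ x)ᵀ.mulVec v.2)
        = (Bblock J₂ (f x) (Kᵀ.mulVec p)).mulVec (A.mulVec v.1)
          + (J₂ (f x))ᵀ.mulVec (Cm.mulVec v.1 + Kᵀ.mulVec v.2)
      rw [Matrix.mulVec_add, Matrix.mulVec_add, Matrix.mulVec_mulVec, Matrix.mulVec_mulVec,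
        Matrix.mulVec_mulVec, Matrix.mulVec_mulVec, Matrix.mulVec_mulVec,
        Matrix.mulVec_mulVec]
      have := congrArg (fun M : Matrix (Fin n) (Fin n) ℝ => M.mulVec v.1) hM3
      simp only [Matrix.add_mulVec] at this
      have h2' : (Kᵀ * (J₁ x)ᵀ).mulVec v.2 = ((J₂ (f x))ᵀ * Kᵀ).mulVec v.2 := by rw [hM2]
      rw [← add_assoc, this, h2', add_assoc]
end
end

section
/- Let J be an almost complex structure and ∇ a connection on ℝ^n, and let a, b ∈ ℝ with b ≠ 0. Define the fiberwise multiplication Z : T*ℝ^n → T*ℝ^n by Z(x,p) = (x, a·p + b·ᵗJ(x)p). Then Z is J^{G,∇}-holomorphic, i.e. d_{(x,p)}Z ∘ J^{G,∇}(x,p) = J^{G,∇}(Z(x,p)) ∘ d_{(x,p)}Z for all (x,p), if and only if (∇J)(J·,·) = (∇J)(·,J·), i.e. J^l_j(x)(∇J)^k_{li}(x) = (∇J)^k_{jl}(x)J^l_i(x) for all x and all indices i,j,k. -/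
open Matrix BigOperators

noncomputable section

/-- Fiberwise multiplication by `a + ib`: `Z(x,p) = (x, a·p + b·ᵗJ(x) p)`. -/
def Zmul {n : ℕ} (J : (Fin n → ℝ) → Matrix (Fin n) (Fin n) ℝ) (a b : ℝ) :
    (Fin n → ℝ) × (Fin n → ℝ) → (Fin n → ℝ) × (Fin n → ℝ) :=
  fun w => (w.1, a • w.2 + b • (J w.1)ᵀ.mulVec w.2)

section perms
variable {n : ℕ} {M : Type*} [AddCommMonoid M]

lemma p3_132 (f : Fin n → Fin n → Fin n → M) :
    ∑ a, ∑ b, ∑ c, f a c b = ∑ a, ∑ b, ∑ c, f a b c :=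
  Finset.sum_congr rfl fun _ _ => Finset.sum_comm

lemma p3_231 (f : Fin n → Fin n → Fin n → M) :
    ∑ a, ∑ b, ∑ c, f b c a = ∑ a, ∑ b, ∑ c, f a b c :=
  calc ∑ a, ∑ b, ∑ c, f b c a = ∑ b, ∑ a, ∑ c, f b c a := Finset.sum_comm
    _ = ∑ b, ∑ c, ∑ a, f b c a := Finset.sum_congr rfl fun _ _ => Finset.sum_comm

lemma p4A (f : Fin n → Fin n → Fin n → Fin n → M) :
    ∑ a, ∑ b, ∑ c, ∑ d, f c b a d = ∑ a, ∑ b, ∑ c, ∑ d, f a b c d :=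
  calc ∑ a, ∑ b, ∑ c, ∑ d, f c b a d = ∑ b, ∑ a, ∑ c, ∑ d, f c b a d := Finset.sum_comm
    _ = ∑ b, ∑ c, ∑ a, ∑ d, f c b a d := Finset.sum_congr rfl fun _ _ => Finset.sum_comm
    _ = ∑ c, ∑ b, ∑ a, ∑ d, f c b a d := Finset.sum_comm

lemma p4B (f : Fin n → Fin n → Fin n → Fin n → M) :
    ∑ a, ∑ b, ∑ c, ∑ d, f c b d a = ∑ a, ∑ b, ∑ c, ∑ d, f a b c d :=
  calc ∑ a, ∑ b, ∑ c, ∑ d, f c b d a = ∑ b, ∑ a, ∑ c, ∑ d, f c b d a := Finset.sum_comm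
    _ = ∑ b, ∑ c, ∑ a, ∑ d, f c b d a := Finset.sum_congr rfl fun _ _ => Finset.sum_comm
    _ = ∑ b, ∑ c, ∑ d, ∑ a, f c b d a :=
        Finset.sum_congr rfl fun _ _ => Finset.sum_congr rfl fun _ _ => Finset.sum_comm
    _ = ∑ c, ∑ b, ∑ d, ∑ a, f c b d a := Finset.sum_comm

lemma p4C (f : Fin n → Fin n → Fin n → Fin n → M) :
    ∑ a, ∑ b, ∑ c, ∑ d, f d a c b = ∑ a, ∑ b, ∑ c, ∑ d, f a b c d :=
  calc ∑ a, ∑ b, ∑ c, ∑ d, f d a c b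
      = ∑ a, ∑ b, ∑ d, ∑ c, f d a c b :=
        Finset.sum_congr rfl fun _ _ => Finset.sum_congr rfl fun _ _ => Finset.sum_comm
    _ = ∑ a, ∑ d, ∑ b, ∑ c, f d a c b := Finset.sum_congr rfl fun _ _ => Finset.sum_comm
    _ = ∑ d, ∑ a, ∑ b, ∑ c, f d a c b := Finset.sum_comm
    _ = ∑ d, ∑ a, ∑ c, ∑ b, f d a c b :=
        Finset.sum_congr rfl fun _ _ => Finset.sum_congr rfl fun _ _ => Finset.sum_comm

end perms
variable {n : ℕ}

def Nf (Jm : Fin n → Fin n → ℝ) (G Dd : Fin n → Fin n → Fin n → ℝ) (k i j : Fin n) : ℝ :=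
  Dd k j i - (∑ l, Jm k l * G l i j) + ∑ l, Jm l j * G k i l

set_option maxHeartbeats 2000000 in
lemma hMaster (Jm : Fin n → Fin n → ℝ) (G Dd : Fin n → Fin n → Fin n → ℝ)
    (a b : ℝ) (p v1 v2 : Fin n → ℝ) (i : Fin n) :
    (a * (∑ m, (∑ k, p k * ((∑ l, G k l i * Jm l m) - ∑ l, G k m l * Jm l i)) * v1 m
          + ∑ m, Jm m i * v2 m)
      + b * ∑ m, (Jm m i * (∑ r, (∑ k, p k * ((∑ l, G k l m * Jm l r) - ∑ l, G k r l * Jm l m)) * v1 r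
              + ∑ r, Jm r m * v2 r)
          + p m * ∑ r, (∑ s, Jm r s * v1 s) * Dd m i r))
    - (∑ m, (∑ k, (a * p k + b * ∑ l, Jm l k * p l) * ((∑ l, G k l i * Jm l m) - ∑ l, G k m l * Jm l i)) * v1 m
      + ∑ m, Jm m i * (a * v2 m + b * ∑ l, (Jm l m * v2 l + p l * ∑ r, v1 r * Dd l m r)))
    = b * ∑ k, ∑ j, p k * v1 j *
        ((∑ l, Jm l j * Nf Jm G Dd k l i) - ∑ l, Nf Jm G Dd k j l * Jm l i) := by
  simp only [Nf, mul_sub, sub_mul, mul_add, add_mul, Finset.mul_sum, Finset.sum_mul,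
    Finset.sum_sub_distrib, Finset.sum_add_distrib]
  simp only [mul_comm, mul_left_comm, mul_assoc]
  ring_nf
  rw [show (∑ x : Fin n, ∑ x_1 : Fin n, ∑ x_2 : Fin n, b * Jm x_1 x_2 * Dd x i x_1 * p x * v1 x_2)
      = ∑ x : Fin n, ∑ x_1 : Fin n, ∑ x_2 : Fin n, b * Jm x_2 x_1 * Dd x i x_2 * p x * v1 x_1 from
    p3_132 (fun α β γ => b * Jm γ β * Dd α i γ * p α * v1 β)]
  rw [show (∑ x : Fin n, ∑ x_1 : Fin n, ∑ x_2 : Fin n, b * Jm x i * Dd x_1 x x_2 * p x_1 * v1 x_2)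
      = ∑ x : Fin n, ∑ x_1 : Fin n, ∑ x_2 : Fin n, b * Jm x_2 i * Dd x x_2 x_1 * p x * v1 x_1 from
    p3_231 (fun α β γ => b * Jm γ i * Dd α γ β * p α * v1 β)]
  rw [show (∑ x : Fin n, ∑ x_1 : Fin n, ∑ x_2 : Fin n, ∑ x_3 : Fin n,
        b * Jm x i * Jm x_3 x_1 * G x_2 x_3 x * p x_2 * v1 x_1)
      = ∑ x : Fin n, ∑ x_1 : Fin n, ∑ x_2 : Fin n, ∑ x_3 : Fin n,
        b * Jm x_3 i * Jm x_2 x_1 * G x x_2 x_3 * p x * v1 x_1 from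
    p4B (fun α β γ δ => b * Jm δ i * Jm γ β * G α γ δ * p α * v1 β)]
  rw [show (∑ x : Fin n, ∑ x_1 : Fin n, ∑ x_2 : Fin n, ∑ x_3 : Fin n,
        b * Jm x i * Jm x_3 x * G x_2 x_1 x_3 * p x_2 * v1 x_1)
      = ∑ x : Fin n, ∑ x_1 : Fin n, ∑ x_2 : Fin n, ∑ x_3 : Fin n,
        b * Jm x_2 i * Jm x_3 x_2 * G x x_1 x_3 * p x * v1 x_1 from
    p4A (fun α β γ δ => b * Jm γ i * Jm δ γ * G α β δ * p α * v1 β)]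
  rw [show (∑ x : Fin n, ∑ x_1 : Fin n, ∑ x_2 : Fin n, ∑ x_3 : Fin n,
        b * Jm x_2 x * Jm x_3 x_1 * G x_1 x_2 i * p x_3 * v1 x)
      = ∑ x : Fin n, ∑ x_1 : Fin n, ∑ x_2 : Fin n, ∑ x_3 : Fin n,
        b * Jm x_2 x_1 * Jm x x_3 * G x_3 x_2 i * p x * v1 x_1 from
    p4C (fun α β γ δ => b * Jm γ β * Jm α δ * G δ γ i * p α * v1 β)]
  rw [show (∑ x : Fin n, ∑ x_1 : Fin n, ∑ x_2 : Fin n, ∑ x_3 : Fin n,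
        b * Jm x_2 i * Jm x_3 x_1 * G x_1 x x_2 * p x_3 * v1 x)
      = ∑ x : Fin n, ∑ x_1 : Fin n, ∑ x_2 : Fin n, ∑ x_3 : Fin n,
        b * Jm x_2 i * Jm x x_3 * G x_3 x_1 x_2 * p x * v1 x_1 from
    p4C (fun α β γ δ => b * Jm γ i * Jm α δ * G δ β γ * p α * v1 β)]
  simp only [mul_comm, mul_left_comm, mul_assoc]
  ring_nf

lemma algiff (Jm : Fin n → Fin n → ℝ) (G Dd : Fin n → Fin n → Fin n → ℝ)
    (a b : ℝ) (hb : b ≠ 0) :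
    (∀ (p v1 v2 : Fin n → ℝ) (i : Fin n),
      a * (∑ m, (∑ k, p k * ((∑ l, G k l i * Jm l m) - ∑ l, G k m l * Jm l i)) * v1 m
          + ∑ m, Jm m i * v2 m)
      + b * ∑ m, (Jm m i * (∑ r, (∑ k, p k * ((∑ l, G k l m * Jm l r) - ∑ l, G k r l * Jm l m)) * v1 r
              + ∑ r, Jm r m * v2 r)
          + p m * ∑ r, (∑ s, Jm r s * v1 s) * Dd m i r)
      = ∑ m, (∑ k, (a * p k + b * ∑ l, Jm l k * p l) * ((∑ l, G k l i * Jm l m) - ∑ l, G k m l * Jm l i)) * v1 m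
      + ∑ m, Jm m i * (a * v2 m + b * ∑ l, (Jm l m * v2 l + p l * ∑ r, v1 r * Dd l m r))) ↔
    (∀ i j k : Fin n, ∑ l, Jm l j * Nf Jm G Dd k l i = ∑ l, Nf Jm G Dd k j l * Jm l i) := by
  constructor
  · intro H i j k
    have h := sub_eq_zero.mpr (H (Pi.single k 1) (Pi.single j 1) 0 i)
    rw [hMaster Jm G Dd a b] at h
    simp only [Pi.single_apply, ite_mul, one_mul, zero_mul, Finset.sum_ite_eq',
      Finset.mem_univ, if_true] at h
    have e1 : ∀ x : Fin n, (∑ x_1 : Fin n, if x = k then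
          (if x_1 = j then (∑ l, Jm l x_1 * Nf Jm G Dd x l i) - ∑ l, Nf Jm G Dd x x_1 l * Jm l i
            else 0) else 0)
        = (if x = k then ((∑ l, Jm l j * Nf Jm G Dd x l i) - ∑ l, Nf Jm G Dd x j l * Jm l i)
            else 0) := by
      intro x; by_cases hx : x = k <;> simp [hx, Finset.sum_ite_eq']
    simp only [e1, Finset.sum_ite_eq', Finset.mem_univ, if_true] at h
    rcases mul_eq_zero.mp h with h3 | h3
    · exact absurd h3 hb
    · exact sub_eq_zero.mp h3
  · intro H p v1 v2 i
    have h := hMaster Jm G Dd a b p v1 v2 i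
    rw [show (∑ k, ∑ j, p k * v1 j *
        ((∑ l, Jm l j * Nf Jm G Dd k l i) - ∑ l, Nf Jm G Dd k j l * Jm l i)) = 0 from
      Finset.sum_eq_zero fun k _ => Finset.sum_eq_zero fun j _ => by
        rw [sub_eq_zero.mpr (H i j k), mul_zero]] at h
    rw [mul_zero] at h
    exact sub_eq_zero.mp h


lemma fderiv_eq_sum_pd {n : ℕ} {f : (Fin n → ℝ) → ℝ} {x : Fin n → ℝ}
    (X : Fin n → ℝ) : fderiv ℝ f x X = ∑ m, X m * pd f m x := by
  conv_lhs => rw [← Finset.univ_sum_single X, map_sum]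
  refine Finset.sum_congr rfl fun m _ => ?_
  have h : Pi.single m (X m) = X m • (Pi.single m 1 : Fin n → ℝ) := by
    funext j
    by_cases hmj : m = j <;> simp [Pi.single_apply, hmj]
  rw [h, _root_.map_smul, smul_eq_mul, pd]

lemma fderivZ {n : ℕ} (J : (Fin n → ℝ) → Matrix (Fin n) (Fin n) ℝ)
    (hJsmooth : ∀ k j : Fin n, ContDiff ℝ (⊤ : ℕ∞) fun x => J x k j)
    (a b : ℝ) (x p : Fin n → ℝ) (v : (Fin n → ℝ) × (Fin n → ℝ)) :
    fderiv ℝ (Zmul J a b) (x, p) v =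
      (v.1, fun i => a * v.2 i + b * ∑ l, (J x l i * v.2 l
          + p l * ∑ m, v.1 m * pd (fun y => J y l i) m x)) := by
  have hZ : Zmul J a b = fun w : (Fin n → ℝ) × (Fin n → ℝ) =>
      (w.1, a • w.2 + b • fun i => ∑ l, J w.1 l i * w.2 l) := by
    funext w
    refine Prod.ext rfl ?_
    funext i
    simp [Matrix.mulVec, dotProduct, Matrix.transpose_apply, Zmul]
  have hcomp : ∀ l i : Fin n, HasFDerivAt (fun w : (Fin n → ℝ) × (Fin n → ℝ) => J w.1 l i * w.2 l)
      (J x l i • ((ContinuousLinearMap.proj l).comp (ContinuousLinearMap.snd ℝ (Fin n → ℝ) (Fin n → ℝ)))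
        + p l • ((fderiv ℝ (fun y => J y l i) x).comp (ContinuousLinearMap.fst ℝ (Fin n → ℝ) (Fin n → ℝ)))) (x, p) := by
    intro l i
    have h1 : HasFDerivAt (fun w : (Fin n → ℝ) × (Fin n → ℝ) => J w.1 l i)
        ((fderiv ℝ (fun y => J y l i) x).comp (ContinuousLinearMap.fst ℝ (Fin n → ℝ) (Fin n → ℝ))) (x, p) :=
      HasFDerivAt.comp (f := Prod.fst) (x, p) (((hJsmooth l i).differentiable (by simp) x).hasFDerivAt)
        (hasFDerivAt_fst (𝕜 := ℝ) (p := (x, p)))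
    have h2 : HasFDerivAt (fun w : (Fin n → ℝ) × (Fin n → ℝ) => w.2 l)
        ((ContinuousLinearMap.proj l).comp (ContinuousLinearMap.snd ℝ (Fin n → ℝ) (Fin n → ℝ))) (x, p) :=
      (((ContinuousLinearMap.proj l).comp (ContinuousLinearMap.snd ℝ (Fin n → ℝ) (Fin n → ℝ)))).hasFDerivAt
    exact h1.mul h2
  have hG : ∀ i : Fin n, HasFDerivAt (fun w : (Fin n → ℝ) × (Fin n → ℝ) => ∑ l, J w.1 l i * w.2 l)
      (∑ l, (J x l i • ((ContinuousLinearMap.proj l).comp (ContinuousLinearMap.snd ℝ (Fin n → ℝ) (Fin n → ℝ)))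
        + p l • ((fderiv ℝ (fun y => J y l i) x).comp (ContinuousLinearMap.fst ℝ (Fin n → ℝ) (Fin n → ℝ))))) (x, p) :=
    fun i => HasFDerivAt.fun_sum (fun l _ => hcomp l i)
  have h2nd := ((hasFDerivAt_snd (𝕜 := ℝ) (p := (x,p))).fun_const_smul a).fun_add
    ((hasFDerivAt_pi.2 hG).fun_const_smul b)
  have hfull := HasFDerivAt.prodMk (hasFDerivAt_fst (𝕜 := ℝ) (p := (x,p))) h2nd
  rw [hZ]
  rw [HasFDerivAt.fderiv hfull]
  ext i
  · simp
  · simp [ContinuousLinearMap.pi_apply, ContinuousLinearMap.sum_apply, smul_eq_mul,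
      fderiv_eq_sum_pd, mul_add, Finset.mul_sum]


/-- the fiberwise multiplication `Z` is `J^{G,∇}`-holomorphic iff
`(∇J)(J·,·) = (∇J)(·,J·)`, i.e. `J^l_j (∇J)^k_{li} = (∇J)^k_{jl} J^l_i` (sum over `l`). -/
theorem statement15 (n : ℕ)
    (J : (Fin n → ℝ) → Matrix (Fin n) (Fin n) ℝ)
    (Γ : (Fin n → ℝ) → Fin n → Fin n → Fin n → ℝ)
    (hJsmooth : ∀ k j : Fin n, ContDiff ℝ (⊤ : ℕ∞) fun x => J x k j)
    (hΓsmooth : ∀ k i j : Fin n, ContDiff ℝ (⊤ : ℕ∞) fun x => Γ x k i j)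
    (hJ : ∀ x, J x * J x = -1)
    (a b : ℝ) (hb : b ≠ 0) :
    (∀ (x p : Fin n → ℝ) (v : (Fin n → ℝ) × (Fin n → ℝ)),
        fderiv ℝ (Zmul J a b) (x, p) (JGmap J Γ x p v) =
          JGmap J Γ (Zmul J a b (x, p)).1 (Zmul J a b (x, p)).2
            (fderiv ℝ (Zmul J a b) (x, p) v)) ↔
      (∀ (x : Fin n → ℝ) (i j k : Fin n),
        ∑ l, J x l j * nablaJ J Γ x k l i = ∑ l, nablaJ J Γ x k j l * J x l i) := by
  have bridge : ∀ (x p : Fin n → ℝ) (v : (Fin n → ℝ) × (Fin n → ℝ)),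
      (fderiv ℝ (Zmul J a b) (x, p) (JGmap J Γ x p v) =
        JGmap J Γ (Zmul J a b (x, p)).1 (Zmul J a b (x, p)).2
          (fderiv ℝ (Zmul J a b) (x, p) v)) ↔
      (∀ i, a * (∑ m, (∑ k, p k * ((∑ l, Γ x k l i * J x l m) - ∑ l, Γ x k m l * J x l i)) * v.1 m
              + ∑ m, J x m i * v.2 m)
          + b * ∑ m, (J x m i * (∑ r, (∑ k, p k * ((∑ l, Γ x k l m * J x l r)
                    - ∑ l, Γ x k r l * J x l m)) * v.1 r + ∑ r, J x r m * v.2 r)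
              + p m * ∑ r, (∑ s, J x r s * v.1 s) * pd (fun y => J y m i) r x)
        = ∑ m, (∑ k, (a * p k + b * ∑ l, J x l k * p l) * ((∑ l, Γ x k l i * J x l m)
                - ∑ l, Γ x k m l * J x l i)) * v.1 m
          + ∑ m, J x m i * (a * v.2 m + b * ∑ l, (J x l m * v.2 l
                + p l * ∑ r, v.1 r * pd (fun y => J y l m) r x))) := by
    intro x p v
    rw [fderivZ J hJsmooth, fderivZ J hJsmooth, Prod.ext_iff]
    simp only [JGmap, Zmul, Ablock, Matrix.mulVec, dotProduct, Matrix.transpose_apply,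
      Matrix.of_apply, Pi.add_apply, Pi.smul_apply, smul_eq_mul, funext_iff, true_and]
  constructor
  · intro H x i j k
    exact (algiff (J x) (Γ x) (fun l i m => pd (fun y => J y l i) m x) a b hb).mp
      (fun p v1 v2 i => (bridge x p (v1, v2)).mp (H x p (v1, v2)) i) i j k
  · intro H x p v
    exact (bridge x p v).mpr fun i =>
      (algiff (J x) (Γ x) (fun l i m => pd (fun y => J y l i) m x) a b hb).mpr
        (fun i j k => H x i j k) p v.1 v.2 i
end
end
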